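/- arXiv:0709.2460 — 8 statements merged into one kernel-verified Lean document; each statement's English description precedes it below -/
import Mathlib

section
/- Let F be a field with a ring involution a ↦ ā, let ε ∈ F, and let A, B, C, D, S be n×n matrices over F with S invertible, S⁻¹AS = C and S⁻¹BS = D. Then the block-diagonal 4n×4n matrix R := diag((S*)⁻¹, (S*)⁻¹, S, S) satisfies R* M R = M and R* N_ε(A,B) R = N_ε(C,D), where (M, N_ε(A,B)) = T_ε(A,B); in particular T_ε(A,B) is *congruent to T_ε(C,D). -/
open Matrix

/-- Index type for `4n × 4n` matrices written in `n × n` blocks. -/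
abbrev Blk (n : ℕ) := (Fin n ⊕ Fin n) ⊕ (Fin n ⊕ Fin n)

/-- The first matrix `M` of the pair `T_ε(A,B)`, with block rows
`(0,0,I,0), (0,0,0,I), (2I,I,0,0), (0,2I,0,0)`. -/
noncomputable def Mblock (F : Type*) [Field F] (n : ℕ) : Matrix (Blk n) (Blk n) F :=
  Matrix.fromBlocks 0 1 (Matrix.fromBlocks ((2 : F) • 1) 1 0 ((2 : F) • 1)) 0

/-- The second matrix `N_ε(A,B)` of the pair `T_ε(A,B)`, with block rows
`(0,0,A,0), (0,0,0,B), (εA*,0,0,0), (0,εB*,0,0)`, where `X* = (X.map σ)ᵀ` is the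
conjugate transpose with respect to the involution `σ`. -/
noncomputable def NblockStar {F : Type*} [Field F] {n : ℕ} (σ : F →+* F) (ε : F)
    (A B : Matrix (Fin n) (Fin n) F) : Matrix (Blk n) (Blk n) F :=
  Matrix.fromBlocks 0 (Matrix.fromBlocks A 0 0 B)
    (Matrix.fromBlocks (ε • (A.map σ)ᵀ) 0 0 (ε • (B.map σ)ᵀ)) 0

/-!
Since `σ` is an involution, `R = diag(P, P, S, S)` with `P = (S*)⁻¹` has
`R* = diag(S⁻¹, S⁻¹, S*, S*)`. Both `M` and `N_ε(A,B)` are block anti-diagonal, so `R* · R`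
multiplies their off-diagonal blocks by these factors: `M` is preserved because
`S⁻¹ S = 1 = S* P`, and the blocks of `N_ε(A,B)` become `S⁻¹ A S = C` and
`ε S* A* P = ε (S⁻¹ A S)* = ε C*`, and likewise for `B`.
-/

namespace Matrix

lemma map_nonsing_inv {ι α β : Type*} [Fintype ι] [DecidableEq ι] [CommRing α] [CommRing β]
    (f : α →+* β) {A : Matrix ι ι α} (hA : IsUnit A) : A⁻¹.map f = (A.map f)⁻¹ := by
  refine (inv_eq_right_inv ?_).symm
  rw [← Matrix.map_mul, mul_nonsing_inv _ ((isUnit_iff_isUnit_det A).mp hA)]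
  simp

lemma map_transpose_similar {ι α β : Type*} [Fintype ι] [DecidableEq ι] [CommRing α]
    [CommRing β] (f : α →+* β) {S : Matrix ι ι α} (hS : IsUnit S) (A : Matrix ι ι α) :
    ((S⁻¹ * A * S).map f)ᵀ = (S.map f)ᵀ * (A.map f)ᵀ * ((S.map f)ᵀ)⁻¹ := by
  simp only [Matrix.map_mul, transpose_mul, map_nonsing_inv f hS, transpose_nonsing_inv,
    Matrix.mul_assoc]

lemma map_transpose_inv_map_transpose {ι α : Type*} [Fintype ι] [DecidableEq ι] [CommRing α]
    {σ : α →+* α} (hσ : Function.Involutive σ) {S : Matrix ι ι α} (hS : IsUnit S) :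
    ((((S.map σ)ᵀ)⁻¹).map σ)ᵀ = S⁻¹ := by
  rw [← transpose_nonsing_inv, ← map_nonsing_inv σ hS, transpose_map, transpose_transpose,
    Matrix.map_map, hσ.comp_self, map_id]

lemma fromBlocks_diagonal_mul_antidiagonal_mul {ι α : Type*} [Fintype ι] [Semiring α]
    (U V U' V' X Y : Matrix ι ι α) :
    fromBlocks U' 0 0 V' * fromBlocks 0 X Y 0 * fromBlocks U 0 0 V
      = fromBlocks 0 (U' * X * V) (V' * Y * U) 0 := by
  simp [fromBlocks_multiply, Matrix.mul_assoc]

lemma fromBlocks_scalar_mul_mul {ι α : Type*} [Fintype ι] [Semiring α]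
    (P Q X Y Z W : Matrix ι ι α) :
    fromBlocks P 0 0 P * fromBlocks X Y Z W * fromBlocks Q 0 0 Q
      = fromBlocks (P * X * Q) (P * Y * Q) (P * Z * Q) (P * W * Q) := by
  simp [fromBlocks_multiply, Matrix.mul_assoc]

end Matrix

section BlockDiagonal

def blockDiag₄ {ι α : Type*} [Zero α] (P Q : Matrix ι ι α) :
    Matrix ((ι ⊕ ι) ⊕ (ι ⊕ ι)) ((ι ⊕ ι) ⊕ (ι ⊕ ι)) α :=
  fromBlocks (fromBlocks P 0 0 P) 0 0 (fromBlocks Q 0 0 Q)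

lemma map_transpose_blockDiag₄ {ι α : Type*} [Semiring α] (σ : α →+* α)
    (P Q : Matrix ι ι α) :
    ((blockDiag₄ P Q).map σ)ᵀ = blockDiag₄ ((P.map σ)ᵀ) ((Q.map σ)ᵀ) := by
  simp [blockDiag₄, fromBlocks_map, fromBlocks_transpose]

lemma isUnit_blockDiag₄ {ι α : Type*} [Fintype ι] [DecidableEq ι] [CommRing α]
    {P Q : Matrix ι ι α} (hP : IsUnit P) (hQ : IsUnit Q) : IsUnit (blockDiag₄ P Q) := by
  rw [isUnit_iff_isUnit_det] at *
  simp only [blockDiag₄, det_fromBlocks_zero₂₁]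
  exact (hP.mul hP).mul (hQ.mul hQ)

variable {F : Type*} [Field F] {n : ℕ}

lemma blockDiag₄_mul_Mblock_mul {P Q P' Q' : Matrix (Fin n) (Fin n) F}
    (h₁ : P' * Q = 1) (h₂ : Q' * P = 1) :
    blockDiag₄ P' Q' * Mblock F n * blockDiag₄ P Q = Mblock F n := by
  rw [blockDiag₄, blockDiag₄, Mblock, ← fromBlocks_one,
    fromBlocks_diagonal_mul_antidiagonal_mul, fromBlocks_scalar_mul_mul, fromBlocks_scalar_mul_mul]
  simp [h₁, h₂]

lemma blockDiag₄_mul_NblockStar_mul (σ : F →+* F) (ε : F)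
    {P Q P' Q' A B C D : Matrix (Fin n) (Fin n) F}
    (hC : P' * A * Q = C) (hD : P' * B * Q = D)
    (hC' : Q' * (A.map σ)ᵀ * P = (C.map σ)ᵀ) (hD' : Q' * (B.map σ)ᵀ * P = (D.map σ)ᵀ) :
    blockDiag₄ P' Q' * NblockStar σ ε A B * blockDiag₄ P Q = NblockStar σ ε C D := by
  rw [blockDiag₄, blockDiag₄, NblockStar, fromBlocks_diagonal_mul_antidiagonal_mul,
    fromBlocks_scalar_mul_mul, fromBlocks_scalar_mul_mul]
  simp [NblockStar, hC, hD, ← hC', ← hD']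

end BlockDiagonal

/-- If `S⁻¹AS = C` and `S⁻¹BS = D` with `S` invertible, then the block-diagonal matrix
`R = diag((S*)⁻¹, (S*)⁻¹, S, S)` satisfies `R* M R = M` and
`R* N_ε(A,B) R = N_ε(C,D)`; in particular `T_ε(A,B)` is *congruent to `T_ε(C,D)`. -/
theorem Tε_starCongruent_of_similar
    {F : Type*} [Field F] (σ : F →+* F) (hσ : Function.Involutive σ)
    {n : ℕ} (ε : F) (A B C D S : Matrix (Fin n) (Fin n) F)
    (hS : IsUnit S) (hC : S⁻¹ * A * S = C) (hD : S⁻¹ * B * S = D) :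
    (let R : Matrix (Blk n) (Blk n) F :=
      Matrix.fromBlocks (Matrix.fromBlocks ((S.map σ)ᵀ)⁻¹ 0 0 ((S.map σ)ᵀ)⁻¹) 0
        0 (Matrix.fromBlocks S 0 0 S)
     (R.map σ)ᵀ * Mblock F n * R = Mblock F n ∧
      (R.map σ)ᵀ * NblockStar σ ε A B * R = NblockStar σ ε C D) ∧
    (∃ R : Matrix (Blk n) (Blk n) F, IsUnit R ∧
      (R.map σ)ᵀ * Mblock F n * R = Mblock F n ∧
      (R.map σ)ᵀ * NblockStar σ ε A B * R = NblockStar σ ε C D) := by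
  set T := (S.map σ)ᵀ
  have hT : IsUnit T := (isUnit_transpose _).mpr (hS.map σ.mapMatrix)
  have hSS : S⁻¹ * S = 1 := nonsing_inv_mul S ((isUnit_iff_isUnit_det S).mp hS)
  have hTT : T * T⁻¹ = 1 := mul_nonsing_inv T ((isUnit_iff_isUnit_det T).mp hT)
  have hRstar : ((blockDiag₄ T⁻¹ S).map σ)ᵀ = blockDiag₄ S⁻¹ T := by
    rw [map_transpose_blockDiag₄, map_transpose_inv_map_transpose hσ hS]
  have key :
      ((blockDiag₄ T⁻¹ S).map σ)ᵀ * Mblock F n * blockDiag₄ T⁻¹ S = Mblock F n ∧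
      ((blockDiag₄ T⁻¹ S).map σ)ᵀ * NblockStar σ ε A B * blockDiag₄ T⁻¹ S
        = NblockStar σ ε C D := by
    rw [hRstar]
    refine ⟨blockDiag₄_mul_Mblock_mul hSS hTT,
      blockDiag₄_mul_NblockStar_mul σ ε hC hD ?_ ?_⟩
    · rw [← hC, map_transpose_similar σ hS]
    · rw [← hD, map_transpose_similar σ hS]
  exact ⟨key, _, isUnit_blockDiag₄ (isUnit_nonsing_inv_iff.mpr hT) hS, key⟩
end

section
/- Let F be a field and let A, B, C, D be n×n matrices over F. Let K denote the 2n×2n matrix with n×n block rows (2I, 0), (I, 2I). If there exist invertible 2n×2n matrices R and S such that R·I_{2n} = I_{2n}·S, R·K = K·S, and R·diag(A,B) = diag(C,D)·S (where diag(A,B) is the block-diagonal matrix with diagonal blocks A and B), then the pair (A,B) is similar to the pair (C,D), i.e. there is an invertible n×n matrix P with PA = CP and PB = DP. -/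
open Matrix

/-- Let `K` be the `2n × 2n` matrix with `n × n` block rows `(2I, 0), (I, 2I)`.
If there are invertible `2n × 2n` matrices `R` and `S` with `R·I = I·S`, `R·K = K·S`,
and `R·diag(A,B) = diag(C,D)·S`, then the pair `(A,B)` is similar to `(C,D)`:
there is an invertible `P` with `PA = CP` and `PB = DP`. -/
theorem pair_similar_of_equivalence
    {F : Type*} [Field F] {n : ℕ} (A B C D : Matrix (Fin n) (Fin n) F)
    (R S : Matrix (Fin n ⊕ Fin n) (Fin n ⊕ Fin n) F)
    (hR : IsUnit R) (hS : IsUnit S)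
    (h1 : R * 1 = 1 * S)
    (h2 : R * Matrix.fromBlocks ((2 : F) • 1) 0 1 ((2 : F) • 1)
        = Matrix.fromBlocks ((2 : F) • 1) 0 1 ((2 : F) • 1) * S)
    (h3 : R * Matrix.fromBlocks A 0 0 B = Matrix.fromBlocks C 0 0 D * S) :
    ∃ P : Matrix (Fin n) (Fin n) F, IsUnit P ∧ P * A = C * P ∧ P * B = D * P := by
  have hSR : S = R := by simpa using h1.symm
  subst hSR
  set P := S.toBlocks₁₁ with hP
  set Q := S.toBlocks₁₂ with hQ
  set X := S.toBlocks₂₁ with hX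
  set Y := S.toBlocks₂₂ with hY
  have hSb : S = Matrix.fromBlocks P Q X Y := (Matrix.fromBlocks_toBlocks S).symm
  rw [hSb] at h2 h3
  rw [Matrix.fromBlocks_multiply, Matrix.fromBlocks_multiply] at h2 h3
  have e11 := congrArg Matrix.toBlocks₁₁ h2
  have e21 := congrArg Matrix.toBlocks₂₁ h2
  simp only [Matrix.toBlocks_fromBlocks₁₁, Matrix.toBlocks_fromBlocks₂₁] at e11 e21
  -- e11 : P * (2•1) + Q * 1 = 2•1 * P + 0 * X
  have hQ0 : Q = 0 := by
    have : (2:F) • P + Q = (2:F) • P := by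
      simpa [Matrix.smul_mul, Matrix.mul_smul] using e11
    have := congrArg (fun M => M - (2:F) • P) this
    simpa [add_sub_cancel_left] using this
  have hYP : Y = P := by
    have : X * ((2:F) • 1) + Y * 1 = 1 * P + ((2:F) • 1) * X := by simpa using e21
    have h' : (2:F) • X + Y = P + (2:F) • X := by
      simpa [Matrix.smul_mul, Matrix.mul_smul] using this
    have := congrArg (fun M => M - (2:F) • X) h'
    simpa [add_sub_cancel_left, add_sub_cancel_right, sub_eq_iff_eq_add] using this
  have f11 := congrArg Matrix.toBlocks₁₁ h3
  have f22 := congrArg Matrix.toBlocks₂₂ h3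
  simp only [Matrix.toBlocks_fromBlocks₁₁, Matrix.toBlocks_fromBlocks₂₂] at f11 f22
  have hPA : P * A = C * P := by simpa [hQ0] using f11
  have hPB : P * B = D * P := by simpa [hQ0, hYP] using f22
  refine ⟨P, ?_, hPA, hPB⟩
  have hdet : IsUnit S.det := hS.map (Matrix.detMonoidHom)
  rw [hSb, hQ0, hYP, Matrix.det_fromBlocks_zero₁₂] at hdet
  exact (Matrix.isUnit_iff_isUnit_det P).2 (isUnit_of_mul_isUnit_left hdet)
end

section
/- Let F be a field and let A be an m×m matrix over F with m ≥ 1 such that A − Aᵀ is invertible. Then there is no invertible m×m matrix S, scalar c ∈ F, and (m−1)×(m−1) matrix G such that SᵀAS = [c] ⊕ G, where [c] ⊕ G denotes the block-diagonal matrix with the 1×1 block (c) followed by the block G. -/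
/-!
Congruence preserves skew-symmetric parts: if `B = SᵀAS` then `B - Bᵀ = Sᵀ(A - Aᵀ)S`, so with
`S` invertible `B - Bᵀ` is invertible as well. But a `1 × 1` block is symmetric, so the skew part
of `[c] ⊕ G` is `0 ⊕ (G - Gᵀ)`, whose determinant is
`det 0 · det (G - Gᵀ) = 0`.
-/

open Matrix

namespace Matrix

variable {R : Type*} {l n : Type*}

theorem isSymm_of_subsingleton [Subsingleton n] (C : Matrix n n R) : C.IsSymm :=
  IsSymm.ext fun i j => by rw [Subsingleton.elim i j]

theorem transpose_mul_mul_sub_transpose [CommRing R] [Fintype n] (S A : Matrix n n R) :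
    Sᵀ * A * S - (Sᵀ * A * S)ᵀ = Sᵀ * (A - Aᵀ) * S := by
  simp only [transpose_mul, transpose_transpose, Matrix.mul_sub, Matrix.sub_mul, Matrix.mul_assoc]

theorem isUnit_transpose_mul_mul_sub_transpose [CommRing R] [Fintype n] [DecidableEq n]
    {S A : Matrix n n R} (hS : IsUnit S) (hA : IsUnit (A - Aᵀ)) :
    IsUnit (Sᵀ * A * S - (Sᵀ * A * S)ᵀ) := by
  rw [Matrix.transpose_mul_mul_sub_transpose]
  exact ((isUnit_transpose S).mpr hS |>.mul hA).mul hS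

theorem fromBlocks_sub_transpose_of_isSymm [AddGroup R] {C : Matrix l l R} (hC : C.IsSymm)
    (G : Matrix n n R) :
    fromBlocks C 0 0 G - (fromBlocks C 0 0 G)ᵀ = fromBlocks 0 0 0 (G - Gᵀ) := by
  rw [fromBlocks_transpose, hC.eq]
  ext (i | i) (j | j) <;> simp

theorem not_isUnit_fromBlocks_zero_left [CommRing R] [Nontrivial R] [Fintype l] [Nonempty l]
    [DecidableEq l] [Fintype n] [DecidableEq n] (G : Matrix n n R) :
    ¬ IsUnit (fromBlocks (0 : Matrix l l R) 0 0 G) := by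
  simp [isUnit_iff_isUnit_det, det_fromBlocks_zero₂₁]

end Matrix

/-- If `A` is an `m × m` matrix (`m ≥ 1`, realized as size `1 + m'`) such that `A - Aᵀ`
is invertible, then no congruence transformation `SᵀAS` with `S` invertible yields a
block-diagonal matrix `[c] ⊕ G` with a `1 × 1` leading block. -/
theorem no_one_dim_summand_of_skew_part_invertible
    {F : Type*} [Field F] {m : ℕ}
    (A : Matrix (Fin 1 ⊕ Fin m) (Fin 1 ⊕ Fin m) F)
    (hA : IsUnit (A - Aᵀ)) :
    ¬ ∃ (S : Matrix (Fin 1 ⊕ Fin m) (Fin 1 ⊕ Fin m) F) (c : F)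
        (G : Matrix (Fin m) (Fin m) F),
        IsUnit S ∧ Sᵀ * A * S = Matrix.fromBlocks !![c] 0 0 G := by
  rintro ⟨S, c, G, hS, hB⟩
  have hskew := isUnit_transpose_mul_mul_sub_transpose hS hA
  rw [hB, fromBlocks_sub_transpose_of_isSymm (isSymm_of_subsingleton _)] at hskew
  exact not_isUnit_fromBlocks_zero_left _ hskew
end

section
/- Let F be a field. If a direct sum of tuples P_1 ⊕ ⋯ ⊕ P_k of matrices over F, each P_i indecomposable with respect to equivalence, is equivalent to a direct sum Q_1 ⊕ ⋯ ⊕ Q_l of tuples each indecomposable with respect to equivalence, then k = l and there is a permutation σ of {1,…,k} such that P_i is equivalent to Q_{σ(i)} for every i (in particular P_i and Q_{σ(i)} have the same size). -/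
/-!
The endomorphisms of a tuple `A` are the pairs `(f, g)` with `f * Aᵢ = Aᵢ * g`; they form a
finite-dimensional algebra. For an endomorphism `T`, the kernel and the image of a high power of
`T` split `A` into a direct sum (Fitting), so every endomorphism of an indecomposable tuple is
nilpotent or invertible, and its endomorphism algebra is local.

Let `φ : ⊕ Pₐ → ⊕ Q_b` be an isomorphism with inverse `ψ`. The composites `ψ_{ab} φ_{ba}` sum to
the identity of `Pₐ`, so one of them is invertible; as `Q_b` is indecomposable, `φ_{ba}` is then
itself an isomorphism `Pₐ ≅ Q_b`. The Schur complement of this invertible block of `φ` is an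
isomorphism between the remaining summands, and induction on the number of summands concludes.
-/

open Matrix

/-- Tuples `A` and `B` of matrices (over possibly different index types of the same
size) are *equivalent* if there are invertible matrices `R`, `S` with `R * Aᵢ * S = Bᵢ`
for all `i`. Invertibility of the (a priori rectangular) matrices `R`, `S` is expressed
by the existence of two-sided inverses. -/
def TuplesEquiv {F : Type*} [Field F] {t : ℕ} {p q p' q' : Type*}
    [Fintype p] [Fintype q] [Fintype p'] [Fintype q'] [DecidableEq p] [DecidableEq q] [DecidableEq p'] [DecidableEq q']
    (A : Fin t → Matrix p q F) (B : Fin t → Matrix p' q' F) : Prop :=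
  ∃ (R : Matrix p' p F) (R' : Matrix p p' F) (S : Matrix q q' F) (S' : Matrix q' q F),
    R * R' = 1 ∧ R' * R = 1 ∧ S * S' = 1 ∧ S' * S = 1 ∧ ∀ i, R * A i * S = B i

/-- A tuple of `m × n` matrices with `m + n > 0` is *indecomposable with respect to
equivalence* if it is not equivalent to a direct sum of two tuples each of whose sizes
`m' × n'` satisfies `m' + n' > 0`. -/
def TupleIndecomposable {F : Type*} [Field F] {t : ℕ} {p q : Type*}
    [Fintype p] [Fintype q] [DecidableEq p] [DecidableEq q] (A : Fin t → Matrix p q F) : Prop :=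
  0 < Fintype.card p + Fintype.card q ∧
  ¬ ∃ (m₁ n₁ m₂ n₂ : ℕ) (B : Fin t → Matrix (Fin m₁) (Fin n₁) F)
      (C : Fin t → Matrix (Fin m₂) (Fin n₂) F),
      0 < m₁ + n₁ ∧ 0 < m₂ + n₂ ∧
      TuplesEquiv A (fun i => Matrix.fromBlocks (B i) 0 0 (C i))

section KrullSchmidt

variable {F : Type*} [Field F] {t : ℕ}

def IsTupleHom {p q p' q' : Type*} [Fintype p] [Fintype q'] (A : Fin t → Matrix p q F)
    (B : Fin t → Matrix p' q' F) (f : Matrix p' p F) (g : Matrix q' q F) : Prop :=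
  ∀ i, f * A i = B i * g

/-- `IsUnit` for matrices whose row and column index types differ (but have the same size). -/
def Matrix.HasInverse {m n : Type*} [Fintype m] [Fintype n] [DecidableEq m] [DecidableEq n]
    (f : Matrix m n F) : Prop :=
  ∃ f' : Matrix n m F, f * f' = 1 ∧ f' * f = 1

section Hom

variable {p q p' q' p'' q'' : Type*} [Fintype p] [Fintype q']
  {A : Fin t → Matrix p q F} {B : Fin t → Matrix p' q' F}

theorem IsTupleHom.comp [Fintype p'] [Fintype q''] {C : Fin t → Matrix p'' q'' F}
    {f : Matrix p'' p' F} {g : Matrix q'' q' F} {f' : Matrix p' p F} {g' : Matrix q' q F}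
    (h : IsTupleHom B C f g) (h' : IsTupleHom A B f' g') :
    IsTupleHom A C (f * f') (g * g') := fun i => by
  rw [Matrix.mul_assoc, h' i, ← Matrix.mul_assoc, h i, Matrix.mul_assoc]

theorem IsTupleHom.add {f f' : Matrix p' p F} {g g' : Matrix q' q F} (h : IsTupleHom A B f g)
    (h' : IsTupleHom A B f' g') : IsTupleHom A B (f + f') (g + g') := fun i => by
  rw [Matrix.add_mul, Matrix.mul_add, h i, h' i]

theorem IsTupleHom.sub {f f' : Matrix p' p F} {g g' : Matrix q' q F} (h : IsTupleHom A B f g)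
    (h' : IsTupleHom A B f' g') : IsTupleHom A B (f - f') (g - g') := fun i => by
  rw [Matrix.sub_mul, Matrix.mul_sub, h i, h' i]

theorem IsTupleHom.inverse [Fintype p'] [Fintype q] [DecidableEq p] [DecidableEq q']
    {f : Matrix p' p F} {g : Matrix q' q F} {f' : Matrix p p' F} {g' : Matrix q q' F}
    (h : IsTupleHom A B f g) (hf : f' * f = 1) (hg : g * g' = 1) : IsTupleHom B A f' g' :=
  fun i => by
    rw [← Matrix.mul_one (f' * B i), ← hg, ← Matrix.mul_assoc, Matrix.mul_assoc f', ← h i,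
      ← Matrix.mul_assoc, hf, Matrix.one_mul]

theorem IsTupleHom.submatrix {p₀ q₀ p₀' q₀' : Type*} [Fintype p₀] [Fintype q₀']
    {f : Matrix p' p F} {g : Matrix q' q F} (h : IsTupleHom A B f g)
    (e₁ : p₀ ≃ p) (e₂ : q₀ ≃ q) (e₃ : p₀' ≃ p') (e₄ : q₀' ≃ q') :
    IsTupleHom (fun i => (A i).submatrix e₁ e₂) (fun i => (B i).submatrix e₃ e₄)
      (f.submatrix e₃ e₁) (g.submatrix e₄ e₂) := fun i => by
  simp only [submatrix_mul_equiv, h i]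

theorem isTupleHom_fromBlocks_iff {p₁ q₁ p₁' q₁' : Type*} [Fintype p₁] [Fintype q₁']
    {D : Fin t → Matrix p₁ q₁ F} {X : Fin t → Matrix p q F} {D' : Fin t → Matrix p₁' q₁' F}
    {Y : Fin t → Matrix p' q' F} {f : Matrix (p₁' ⊕ p') (p₁ ⊕ p) F}
    {g : Matrix (q₁' ⊕ q') (q₁ ⊕ q) F} :
    IsTupleHom (fun i => fromBlocks (D i) 0 0 (X i)) (fun i => fromBlocks (D' i) 0 0 (Y i)) f g ↔
      IsTupleHom D D' f.toBlocks₁₁ g.toBlocks₁₁ ∧ IsTupleHom X D' f.toBlocks₁₂ g.toBlocks₁₂ ∧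
      IsTupleHom D Y f.toBlocks₂₁ g.toBlocks₂₁ ∧ IsTupleHom X Y f.toBlocks₂₂ g.toBlocks₂₂ := by
  simp only [IsTupleHom, ← forall_and]
  refine forall_congr' fun i => ?_
  conv_lhs => rw [← fromBlocks_toBlocks f, ← fromBlocks_toBlocks g, fromBlocks_multiply,
    fromBlocks_multiply, fromBlocks_inj]
  simp

end Hom

theorem Matrix.isIdempotentElem_mul_of_mul_eq_one {m n : Type*} [Fintype m] [Fintype n]
    [DecidableEq n] {M : Matrix m n F} {N : Matrix n m F} (h : N * M = 1) : IsIdempotentElem (M * N) := by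
  rw [IsIdempotentElem, Matrix.mul_assoc, ← Matrix.mul_assoc N, h, Matrix.one_mul]

theorem Matrix.isEmpty_of_mul_eq_one_of_mul_eq_zero {m n : Type*} [Fintype m] [Fintype n]
    [DecidableEq n] {M : Matrix m n F} {N : Matrix n m F}
    (h : N * M = 1) (h₀ : M * N = 0) : IsEmpty n := by
  refine not_nonempty_iff.1 fun _ => one_ne_zero (α := Matrix n n F) ?_
  calc (1 : Matrix n n F) = N * (M * N) * M := by
        rw [← Matrix.mul_assoc, h, Matrix.one_mul, h]
    _ = 0 := by rw [h₀, Matrix.mul_zero, Matrix.zero_mul]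

section Inverse

variable {m n m' n' : Type*} [Fintype m] [Fintype n] [Fintype m'] [Fintype n']
  [DecidableEq m] [DecidableEq n] [DecidableEq m'] [DecidableEq n']

theorem Matrix.hasInverse_of_isUnit {M : Matrix m m F} (hM : IsUnit M) : M.HasInverse := by
  obtain ⟨u, rfl⟩ := hM
  exact ⟨↑u⁻¹, u.mul_inv, u.inv_mul⟩

theorem Matrix.HasInverse.mul {l : Type*} [Fintype l] [DecidableEq l] {M : Matrix l m F}
    {N : Matrix m n F} (hM : M.HasInverse) (hN : N.HasInverse) : (M * N).HasInverse := by
  obtain ⟨M', hM₁, hM₂⟩ := hM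
  obtain ⟨N', hN₁, hN₂⟩ := hN
  refine ⟨N' * M', ?_, ?_⟩
  · rw [Matrix.mul_assoc, ← Matrix.mul_assoc N, hN₁, Matrix.one_mul, hM₁]
  · rw [Matrix.mul_assoc, ← Matrix.mul_assoc M', hM₂, Matrix.one_mul, hN₂]

theorem Matrix.HasInverse.submatrix {M : Matrix m n F} (hM : M.HasInverse) (e₁ : m' ≃ m)
    (e₂ : n' ≃ n) : (M.submatrix e₁ e₂).HasInverse := by
  obtain ⟨M', h₁, h₂⟩ := hM
  exact ⟨M'.submatrix e₂ e₁, by simp [h₁], by simp [h₂]⟩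

theorem Matrix.HasInverse.card_eq {M : Matrix m n F} (hM : M.HasInverse) :
    Fintype.card m = Fintype.card n := by
  obtain ⟨M', h, h'⟩ := hM
  refine le_antisymm ?_ ?_
  · calc Fintype.card m = (M * M').rank := by rw [h, rank_one]
      _ ≤ Fintype.card n := (rank_mul_le_left M M').trans (rank_le_card_width M)
  · calc Fintype.card n = (M' * M).rank := by rw [h', rank_one]
      _ ≤ Fintype.card m := (rank_mul_le_left M' M).trans (rank_le_card_width M')

theorem Matrix.HasInverse.of_fromBlocks_zero {E : Matrix m n F} {G : Matrix m' n' F}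
    (h : (fromBlocks E 0 0 G).HasInverse) : E.HasInverse := by
  obtain ⟨N, h₁, h₂⟩ := h
  rw [← fromBlocks_toBlocks N, fromBlocks_multiply, ← fromBlocks_one, fromBlocks_inj] at h₁ h₂
  exact ⟨N.toBlocks₁₁, by simpa using h₁.1, by simpa using h₂.1⟩

theorem Matrix.HasInverse.schurComplement {M : Matrix (m ⊕ m') (n ⊕ n') F} (hM : M.HasInverse)
    {w : Matrix n' m' F} (hw : M.toBlocks₂₂ * w = 1) (hw' : w * M.toBlocks₂₂ = 1) :
    (M.toBlocks₁₁ - M.toBlocks₁₂ * w * M.toBlocks₂₁).HasInverse := by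
  have hLDU : (fromBlocks 1 (-(M.toBlocks₁₂ * w)) 0 1 : Matrix (m ⊕ m') (m ⊕ m') F) * M *
      (fromBlocks 1 0 (-(w * M.toBlocks₂₁)) 1 : Matrix (n ⊕ n') (n ⊕ n') F) =
      fromBlocks (M.toBlocks₁₁ - M.toBlocks₁₂ * w * M.toBlocks₂₁) 0 0 M.toBlocks₂₂ := by
    have h₂₁ : M.toBlocks₂₂ * (w * M.toBlocks₂₁) = M.toBlocks₂₁ := by
      rw [← Matrix.mul_assoc, hw, Matrix.one_mul]
    conv_lhs => rw [← fromBlocks_toBlocks M]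
    simp [fromBlocks_multiply, Matrix.mul_assoc, hw', h₂₁, sub_eq_add_neg]
  refine HasInverse.of_fromBlocks_zero (G := M.toBlocks₂₂) ?_
  rw [← hLDU]
  refine ((hasInverse_of_isUnit ?_).mul hM).mul (hasInverse_of_isUnit ?_)
  · simp [isUnit_fromBlocks_zero₂₁]
  · simp [isUnit_fromBlocks_zero₁₂]

theorem tuplesEquiv_iff_exists_isTupleHom {A : Fin t → Matrix m n F}
    {B : Fin t → Matrix m' n' F} :
    TuplesEquiv A B ↔ ∃ (f : Matrix m' m F) (g : Matrix n' n F),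
      f.HasInverse ∧ g.HasInverse ∧ IsTupleHom A B f g := by
  constructor
  · rintro ⟨R, R', S, S', hRR', hR'R, hSS', hS'S, h⟩
    exact ⟨R, S', ⟨R', hRR', hR'R⟩, ⟨S, hS'S, hSS'⟩, fun i => by
      rw [← h i, Matrix.mul_assoc _ S, hSS', Matrix.mul_one]⟩
  · rintro ⟨f, g, ⟨f', hff', hf'f⟩, ⟨g', hgg', hg'g⟩, h⟩
    exact ⟨f, f', g', g, hff', hf'f, hg'g, hgg', fun i => by
      rw [h i, Matrix.mul_assoc, hgg', Matrix.mul_one]⟩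

end Inverse

section Fitting

variable {p q : Type*} [Fintype p] [Fintype q] [DecidableEq p] [DecidableEq q]
  {A : Fin t → Matrix p q F}

theorem tuplesEquiv_toMatrix {ι κ : Type*} [Fintype ι] [Fintype κ] [DecidableEq ι]
    [DecidableEq κ] (A : Fin t → Matrix p q F) (b : Module.Basis ι F (q → F))
    (c : Module.Basis κ F (p → F)) :
    TuplesEquiv A fun i => LinearMap.toMatrix b c (toLin' (A i)) := by
  refine ⟨c.toMatrix (Pi.basisFun F p), (Pi.basisFun F p).toMatrix c,
    (Pi.basisFun F q).toMatrix b, b.toMatrix (Pi.basisFun F q),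
    c.toMatrix_mul_toMatrix_flip _, Module.Basis.toMatrix_mul_toMatrix_flip _ _,
    Module.Basis.toMatrix_mul_toMatrix_flip _ _, b.toMatrix_mul_toMatrix_flip _, fun i => ?_⟩
  dsimp only
  rw [← basis_toMatrix_mul_linearMap_toMatrix_mul_basis_toMatrix b (Pi.basisFun F q) c
    (Pi.basisFun F p), ← Matrix.toLin_eq_toLin', LinearMap.toMatrix_toLin]

theorem LinearMap.toMatrix_prodMap' {M₁ M₂ N₁ N₂ ι₁ ι₂ κ₁ κ₂ : Type*} [AddCommGroup M₁]
    [Module F M₁] [AddCommGroup M₂] [Module F M₂] [AddCommGroup N₁] [Module F N₁]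
    [AddCommGroup N₂] [Module F N₂] [Fintype ι₁] [Fintype ι₂] [Fintype κ₁] [Fintype κ₂]
    [DecidableEq ι₁] [DecidableEq ι₂] (b₁ : Module.Basis ι₁ F M₁) (b₂ : Module.Basis ι₂ F M₂)
    (c₁ : Module.Basis κ₁ F N₁) (c₂ : Module.Basis κ₂ F N₂) (φ₁ : M₁ →ₗ[F] N₁)
    (φ₂ : M₂ →ₗ[F] N₂) :
    toMatrix (b₁.prod b₂) (c₁.prod c₂) (φ₁.prodMap φ₂) =
      fromBlocks (toMatrix b₁ c₁ φ₁) 0 0 (toMatrix b₂ c₂ φ₂) := by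
  ext (i | i) (j | j) <;> simp [toMatrix_apply]

open Module in
theorem TupleIndecomposable.eq_bot_or_eq_bot_of_isCompl (hA : TupleIndecomposable A)
    {V₁ V₂ : Submodule F (p → F)} {W₁ W₂ : Submodule F (q → F)} (hV : IsCompl V₁ V₂)
    (hW : IsCompl W₁ W₂) (h₁ : ∀ i, ∀ w ∈ W₁, A i *ᵥ w ∈ V₁)
    (h₂ : ∀ i, ∀ w ∈ W₂, A i *ᵥ w ∈ V₂) :
    V₁ = ⊥ ∧ W₁ = ⊥ ∨ V₂ = ⊥ ∧ W₂ = ⊥ := by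
  have pos : ∀ (V : Submodule F (p → F)) (W : Submodule F (q → F)), ¬(V = ⊥ ∧ W = ⊥) →
      0 < finrank F V + finrank F W := fun V W h => by
    by_contra h0
    exact h ⟨Submodule.finrank_eq_zero.1 (by omega), Submodule.finrank_eq_zero.1 (by omega)⟩
  by_contra hne
  rw [not_or] at hne
  let eV := Submodule.prodEquivOfIsCompl V₁ V₂ hV
  let eW := Submodule.prodEquivOfIsCompl W₁ W₂ hW
  let a₁ i : W₁ →ₗ[F] V₁ := (toLin' (A i)).restrict (h₁ i)
  let a₂ i : W₂ →ₗ[F] V₂ := (toLin' (A i)).restrict (h₂ i)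
  have hsplit : ∀ i, eV.symm.toLinearMap ∘ₗ toLin' (A i) ∘ₗ eW.toLinearMap =
      (a₁ i).prodMap (a₂ i) := fun i => by
    apply LinearMap.prod_ext <;> ext w : 1 <;>
      simp only [LinearMap.comp_apply, LinearEquiv.coe_coe, LinearEquiv.symm_apply_eq] <;>
      simp [eV, eW, a₁, a₂] <;> rfl
  refine hA.2 ⟨_, _, _, _, fun i => LinearMap.toMatrix (finBasis F W₁) (finBasis F V₁) (a₁ i),
    fun i => LinearMap.toMatrix (finBasis F W₂) (finBasis F V₂) (a₂ i), pos _ _ hne.1,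
    pos _ _ hne.2, ?_⟩
  convert tuplesEquiv_toMatrix A (((finBasis F W₁).prod (finBasis F W₂)).map eW)
    (((finBasis F V₁).prod (finBasis F V₂)).map eV) using 2 with i
  rw [LinearMap.toMatrix_map_left, LinearMap.toMatrix_map_right, hsplit,
    LinearMap.toMatrix_prodMap']

variable (A) in
def tupleEnd : Subalgebra F (Matrix p p F × Matrix q q F) where
  carrier := {T | IsTupleHom A A T.1 T.2}
  mul_mem' ha hb := ha.comp hb
  one_mem' i := by simp
  add_mem' ha hb := ha.add hb
  algebraMap_mem' c i := by simp [Algebra.algebraMap_eq_smul_one]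

theorem nontrivial_tupleEnd (hA : 0 < Fintype.card p + Fintype.card q) :
    Nontrivial (tupleEnd A) := by
  refine ⟨0, 1, fun h => ?_⟩
  have h' := congrArg Subtype.val h
  rcases (Fintype.card p).eq_zero_or_pos with hp | hp
  · have : Nonempty q := Fintype.card_pos_iff.1 (by omega)
    exact zero_ne_one (congrArg Prod.snd h')
  · have : Nonempty p := Fintype.card_pos_iff.1 hp
    exact zero_ne_one (congrArg Prod.fst h')

theorem isUnit_tupleEnd_of_isUnit {T : tupleEnd A} (h₁ : IsUnit T.1.1) (h₂ : IsUnit T.1.2) :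
    IsUnit T := by
  obtain ⟨u₁, hu₁⟩ := h₁
  obtain ⟨u₂, hu₂⟩ := h₂
  have hinv : IsTupleHom A A ↑u₁⁻¹ ↑u₂⁻¹ :=
    IsTupleHom.inverse (f := T.1.1) (g := T.1.2) T.2 (by rw [← hu₁, u₁.inv_mul])
      (by rw [← hu₂, u₂.mul_inv])
  refine isUnit_iff_exists.2 ⟨⟨(↑u₁⁻¹, ↑u₂⁻¹), hinv⟩, ?_, ?_⟩ <;>
    ext1 <;> ext1 <;> simp [← hu₁, ← hu₂]

theorem TupleIndecomposable.isNilpotent_or_isUnit (hA : TupleIndecomposable A)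
    (T : tupleEnd A) : IsNilpotent T ∨ IsUnit T := by
  obtain ⟨n, hf, hg, hn⟩ := ((toLin' T.1.1).eventually_isCompl_ker_pow_range_pow.and
    ((toLin' T.1.2).eventually_isCompl_ker_pow_range_pow.and
      (Filter.eventually_ge_atTop 1))).exists
  rw [← toLin'_pow] at hf hg
  have hTn : IsTupleHom A A (T.1.1 ^ n) (T.1.2 ^ n) := (T ^ n).2
  have hcomm : ∀ i w, A i *ᵥ (T.1.2 ^ n *ᵥ w) = T.1.1 ^ n *ᵥ (A i *ᵥ w) := fun i w => by
    rw [mulVec_mulVec, mulVec_mulVec, hTn i]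
  rcases hA.eq_bot_or_eq_bot_of_isCompl hf hg
    (fun i w hw => by
      rw [LinearMap.mem_ker, toLin'_apply] at hw ⊢
      rw [← hcomm, hw, mulVec_zero])
    (fun i w hw => by
      obtain ⟨v, rfl⟩ := LinearMap.mem_range.1 hw
      exact ⟨A i *ᵥ v, by rw [toLin'_apply, toLin'_apply, hcomm]⟩)
    with ⟨hker₁, hker₂⟩ | ⟨hrange₁, hrange₂⟩
  · right
    rw [← isUnit_pow_iff (by omega : n ≠ 0)]
    exact isUnit_tupleEnd_of_isUnit
      (mulVec_injective_iff_isUnit.1 (LinearMap.ker_eq_bot.1 hker₁))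
      (mulVec_injective_iff_isUnit.1 (LinearMap.ker_eq_bot.1 hker₂))
  · left
    refine ⟨n, Subtype.ext (Prod.ext ?_ ?_)⟩ <;> refine toLin'.injective ?_
    · simpa [LinearMap.range_eq_bot] using hrange₁
    · simpa [LinearMap.range_eq_bot] using hrange₂

theorem TupleIndecomposable.isLocalRing (hA : TupleIndecomposable A) :
    IsLocalRing (tupleEnd A) :=
  have := nontrivial_tupleEnd (A := A) hA.1
  .of_isUnit_or_isUnit_one_sub_self fun T =>
    (hA.isNilpotent_or_isUnit T).symm.imp_right IsNilpotent.isUnit_one_sub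

end Fitting

section Cancellation

variable {p q p' q' : Type*} [Fintype p] [Fintype q] [Fintype p'] [Fintype q'] [DecidableEq p]
  [DecidableEq q] [DecidableEq p'] [DecidableEq q']

theorem IsTupleHom.hasInverse_of_isUnit_comp {X : Fin t → Matrix p q F}
    {Y : Fin t → Matrix p' q' F} (hX : 0 < Fintype.card p + Fintype.card q)
    (hY : TupleIndecomposable Y) {f : Matrix p' p F} {g : Matrix q' q F} {f' : Matrix p p' F}
    {g' : Matrix q q' F} (hf : IsTupleHom X Y f g) (hf' : IsTupleHom Y X f' g')
    (hu : IsUnit (⟨(f' * f, g' * g), hf'.comp hf⟩ : tupleEnd X)) :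
    f.HasInverse ∧ g.HasInverse := by
  obtain ⟨v, hvu⟩ := hu.exists_left_inv
  have h₁ : v.1.1 * f' * f = 1 := by
    rw [Matrix.mul_assoc]
    exact congrArg (fun T : tupleEnd X => T.1.1) hvu
  have h₂ : v.1.2 * g' * g = 1 := by
    rw [Matrix.mul_assoc]
    exact congrArg (fun T : tupleEnd X => T.1.2) hvu
  -- the projection of `Y` onto the copy of `X` embedded by `(f, g)`
  let e : tupleEnd Y := ⟨(f * (v.1.1 * f'), g * (v.1.2 * g')), hf.comp (v.2.comp hf')⟩
  have he : IsIdempotentElem e := Subtype.ext <|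
    Prod.ext (isIdempotentElem_mul_of_mul_eq_one h₁) (isIdempotentElem_mul_of_mul_eq_one h₂)
  rcases hY.isNilpotent_or_isUnit e with he_nil | he_unit
  · have e₀ := he.eq_zero_of_isNilpotent he_nil
    have := isEmpty_of_mul_eq_one_of_mul_eq_zero h₁ (congrArg (fun T : tupleEnd Y => T.1.1) e₀)
    have := isEmpty_of_mul_eq_one_of_mul_eq_zero h₂ (congrArg (fun T : tupleEnd Y => T.1.2) e₀)
    simp at hX
  · have e₁ := (IsIdempotentElem.iff_eq_one_of_isUnit he_unit).1 he
    exact ⟨⟨_, congrArg (fun T : tupleEnd Y => T.1.1) e₁, h₁⟩,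
      ⟨_, congrArg (fun T : tupleEnd Y => T.1.2) e₁, h₂⟩⟩

theorem tuplesEquiv_of_isTupleHom_fromBlocks {p₁ q₁ p₁' q₁' : Type*} [Fintype p₁]
    [Fintype q₁] [Fintype p₁'] [Fintype q₁'] [DecidableEq p₁] [DecidableEq q₁]
    [DecidableEq p₁'] [DecidableEq q₁'] {D : Fin t → Matrix p₁ q₁ F}
    {X : Fin t → Matrix p q F} {D' : Fin t → Matrix p₁' q₁' F} {Y : Fin t → Matrix p' q' F}
    {f : Matrix (p₁' ⊕ p') (p₁ ⊕ p) F} {g : Matrix (q₁' ⊕ q') (q₁ ⊕ q) F}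
    (hf : f.HasInverse) (hg : g.HasInverse)
    (h : IsTupleHom (fun i => fromBlocks (D i) 0 0 (X i)) (fun i => fromBlocks (D' i) 0 0 (Y i))
      f g)
    (hf₂₂ : f.toBlocks₂₂.HasInverse) (hg₂₂ : g.toBlocks₂₂.HasInverse) : TuplesEquiv D D' := by
  obtain ⟨h₁₁, h₁₂, h₂₁, h₂₂⟩ := isTupleHom_fromBlocks_iff.1 h
  obtain ⟨w, hw, hw'⟩ := hf₂₂
  obtain ⟨v, hv, hv'⟩ := hg₂₂
  refine tuplesEquiv_iff_exists_isTupleHom.2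
    ⟨_, _, hf.schurComplement hw hw', hg.schurComplement hv hv', ?_⟩
  simpa only [Matrix.mul_assoc] using h₁₁.sub (h₁₂.comp ((h₂₂.inverse hw' hv).comp h₂₁))

end Cancellation

section BlockDiagonal

variable {ι κ : Type*} [Fintype ι] [Fintype κ] {m n : ι → Type*} {m' n' : κ → Type*}
  {P : ∀ a, Fin t → Matrix (m a) (n a) F} {Q : ∀ b, Fin t → Matrix (m' b) (n' b) F}

theorem Matrix.sum_submatrix_sigmaMk_mul [∀ a, Fintype (m a)] {l l' r c : Type*}
    (f : Matrix l (Σ a, m a) F) (g : Matrix (Σ a, m a) l' F) (e₁ : r → l) (e₂ : c → l') :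
    ∑ a, f.submatrix e₁ (Sigma.mk a) * g.submatrix (Sigma.mk a) e₂ = (f * g).submatrix e₁ e₂ := by
  ext x y
  simp [mul_apply, Fintype.sum_sigma, Matrix.sum_apply]

theorem isEmpty_iff_card_sigma_add_card_sigma_eq_zero [∀ a, Fintype (m a)] [∀ a, Fintype (n a)]
    (h : ∀ a, 0 < Fintype.card (m a) + Fintype.card (n a)) :
    IsEmpty ι ↔ Fintype.card (Σ a, m a) + Fintype.card (Σ a, n a) = 0 := by
  simp only [Fintype.card_sigma, ← Finset.sum_add_distrib, Finset.sum_eq_zero_iff,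
    Finset.mem_univ, true_implies]
  exact ⟨fun _ => isEmptyElim, fun h0 => ⟨fun a => (h a).ne' (h0 a)⟩⟩

variable [DecidableEq ι] [DecidableEq κ]

theorem Matrix.mul_blockDiagonal'_submatrix_sigmaMk [∀ a, Fintype (m a)] {l l' : Type*}
    (f : Matrix l (Σ a, m a) F) (M : ∀ a, Matrix (m a) (n a) F) (r : l' → l) (a : ι) :
    (f * blockDiagonal' M).submatrix r (Sigma.mk a) = f.submatrix r (Sigma.mk a) * M a := by
  ext x y
  simp [mul_apply, Fintype.sum_sigma, blockDiagonal'_apply]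

theorem Matrix.blockDiagonal'_mul_submatrix_sigmaMk [∀ a, Fintype (n a)] {l l' : Type*}
    (g : Matrix (Σ a, n a) l F) (M : ∀ a, Matrix (m a) (n a) F) (c : l' → l) (a : ι) :
    (blockDiagonal' M * g).submatrix (Sigma.mk a) c = M a * g.submatrix (Sigma.mk a) c := by
  ext x y
  simp [mul_apply, Fintype.sum_sigma, blockDiagonal'_apply]

theorem IsTupleHom.blockDiagonal'_block [∀ a, Fintype (m a)] [∀ b, Fintype (n' b)]
    {f : Matrix (Σ b, m' b) (Σ a, m a) F} {g : Matrix (Σ b, n' b) (Σ a, n a) F}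
    (h : IsTupleHom (fun i => blockDiagonal' fun a => P a i)
      (fun i => blockDiagonal' fun b => Q b i) f g) (a : ι) (b : κ) :
    IsTupleHom (P a) (Q b) (f.submatrix (Sigma.mk b) (Sigma.mk a))
      (g.submatrix (Sigma.mk b) (Sigma.mk a)) := fun i => by
  rw [← mul_blockDiagonal'_submatrix_sigmaMk f (fun a => P a i), h i,
    blockDiagonal'_mul_submatrix_sigmaMk g (fun b => Q b i)]

variable [∀ a, Fintype (m a)] [∀ a, Fintype (n a)] [∀ b, Fintype (m' b)] [∀ b, Fintype (n' b)]
  [∀ a, DecidableEq (m a)] [∀ a, DecidableEq (n a)] [∀ b, DecidableEq (m' b)]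
  [∀ b, DecidableEq (n' b)]

theorem exists_hasInverse_block_of_isTupleHom_blockDiagonal' {a : ι}
    (hP : TupleIndecomposable (P a)) (hQ : ∀ b, TupleIndecomposable (Q b))
    {f : Matrix (Σ b, m' b) (Σ a, m a) F} {g : Matrix (Σ b, n' b) (Σ a, n a) F}
    (hf : f.HasInverse) (hg : g.HasInverse)
    (h : IsTupleHom (fun i => blockDiagonal' fun a => P a i)
      (fun i => blockDiagonal' fun b => Q b i) f g) :
    ∃ b, (f.submatrix (Sigma.mk b) (Sigma.mk a)).HasInverse ∧
      (g.submatrix (Sigma.mk b) (Sigma.mk a)).HasInverse := by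
  obtain ⟨f', -, hf'f⟩ := hf
  obtain ⟨g', hgg', hg'g⟩ := hg
  have h' := h.inverse hf'f hgg'
  let u b : tupleEnd (P a) :=
    ⟨(f'.submatrix (Sigma.mk a) (Sigma.mk b) * f.submatrix (Sigma.mk b) (Sigma.mk a),
      g'.submatrix (Sigma.mk a) (Sigma.mk b) * g.submatrix (Sigma.mk b) (Sigma.mk a)),
      (h'.blockDiagonal'_block b a).comp (h.blockDiagonal'_block a b)⟩
  have hsum : ∑ b, u b = 1 := by
    refine Subtype.ext (Prod.ext ?_ ?_)
    · simp [u, Prod.fst_sum, sum_submatrix_sigmaMk_mul, hf'f, submatrix_one _ sigma_mk_injective]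
    · simp [u, Prod.snd_sum, sum_submatrix_sigmaMk_mul, hg'g, submatrix_one _ sigma_mk_injective]
  have := hP.isLocalRing
  obtain ⟨b, -, hb⟩ := IsLocalRing.exists_of_isUnit_sum (hsum ▸ isUnit_one)
  exact ⟨b, (h.blockDiagonal'_block a b).hasInverse_of_isUnit_comp hP.1 (hQ b)
    (h'.blockDiagonal'_block b a) hb⟩

theorem isEmpty_iff_of_tuplesEquiv_blockDiagonal'
    (hP : ∀ a, TupleIndecomposable (P a)) (hQ : ∀ b, TupleIndecomposable (Q b))
    (h : TuplesEquiv (fun i => blockDiagonal' fun a => P a i)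
      (fun i => blockDiagonal' fun b => Q b i)) : IsEmpty ι ↔ IsEmpty κ := by
  obtain ⟨f, g, hf, hg, -⟩ := tuplesEquiv_iff_exists_isTupleHom.1 h
  rw [isEmpty_iff_card_sigma_add_card_sigma_eq_zero fun a => (hP a).1,
    isEmpty_iff_card_sigma_add_card_sigma_eq_zero fun b => (hQ b).1, hf.card_eq, hg.card_eq]

end BlockDiagonal

def sigmaSuccAboveEquiv {k : ℕ} (α : Fin (k + 1) → Type*) (b : Fin (k + 1)) :
    ((Σ j : Fin k, α (b.succAbove j)) ⊕ α b) ≃ Σ c, α c where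
  toFun := Sum.elim (fun x => ⟨b.succAbove x.1, x.2⟩) (fun y => ⟨b, y⟩)
  invFun x := Fin.insertNth (α := fun c => α c → (Σ j : Fin k, α (b.succAbove j)) ⊕ α b)
    b Sum.inr (fun j y => Sum.inl ⟨j, y⟩) x.1 x.2
  left_inv := by rintro (⟨j, y⟩ | y) <;> simp
  right_inv := by
    rintro ⟨c, y⟩
    induction c using Fin.succAboveCases b <;> simp

theorem blockDiagonal'_submatrix_sigmaSuccAboveEquiv {k : ℕ} {m n : Fin (k + 1) → Type*}
    (M : ∀ b, Matrix (m b) (n b) F) (b : Fin (k + 1)) :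
    (blockDiagonal' M).submatrix (sigmaSuccAboveEquiv m b) (sigmaSuccAboveEquiv n b) =
      fromBlocks (blockDiagonal' fun j => M (b.succAbove j)) 0 0 (M b) := by
  ext (⟨j, x⟩ | x) (⟨j', y⟩ | y)
  · rcases eq_or_ne j j' with rfl | hne
    · simp [sigmaSuccAboveEquiv]
    · simp [sigmaSuccAboveEquiv, blockDiagonal'_apply_ne _ _ _ hne,
        blockDiagonal'_apply_ne _ _ _ (Fin.succAbove_right_injective.ne hne)]
  · simp [sigmaSuccAboveEquiv, blockDiagonal'_apply_ne _ _ _ (Fin.succAbove_ne b j)]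
  · simp [sigmaSuccAboveEquiv, blockDiagonal'_apply_ne _ _ _ (Fin.succAbove_ne b j').symm]
  · simp [sigmaSuccAboveEquiv]

section SuccAbove

variable {k l : ℕ} {m n : Fin (k + 1) → Type*} {m' n' : Fin (l + 1) → Type*}
  [∀ a, Fintype (m a)] [∀ a, Fintype (n a)] [∀ b, Fintype (m' b)] [∀ b, Fintype (n' b)]
  [∀ a, DecidableEq (m a)] [∀ a, DecidableEq (n a)] [∀ b, DecidableEq (m' b)]
  [∀ b, DecidableEq (n' b)]

theorem tuplesEquiv_blockDiagonal'_succAbove {P : ∀ a, Fin t → Matrix (m a) (n a) F}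
    {Q : ∀ b, Fin t → Matrix (m' b) (n' b) F} {f : Matrix (Σ b, m' b) (Σ a, m a) F}
    {g : Matrix (Σ b, n' b) (Σ a, n a) F} (hf : f.HasInverse) (hg : g.HasInverse)
    (h : IsTupleHom (fun i => blockDiagonal' fun a => P a i)
      (fun i => blockDiagonal' fun b => Q b i) f g) {a : Fin (k + 1)} {b : Fin (l + 1)}
    (hfab : (f.submatrix (Sigma.mk b) (Sigma.mk a)).HasInverse)
    (hgab : (g.submatrix (Sigma.mk b) (Sigma.mk a)).HasInverse) :
    TuplesEquiv (fun i => blockDiagonal' fun j => P (a.succAbove j) i)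
      (fun i => blockDiagonal' fun j => Q (b.succAbove j) i) := by
  have hsplit := h.submatrix (sigmaSuccAboveEquiv m a) (sigmaSuccAboveEquiv n a)
    (sigmaSuccAboveEquiv m' b) (sigmaSuccAboveEquiv n' b)
  simp only [blockDiagonal'_submatrix_sigmaSuccAboveEquiv] at hsplit
  exact tuplesEquiv_of_isTupleHom_fromBlocks (hf.submatrix _ _) (hg.submatrix _ _) hsplit hfab hgab

end SuccAbove

theorem Fin.exists_equiv_forall_of_succAbove {k : ℕ} {r : Fin (k + 1) → Fin (k + 1) → Prop}
    {a b : Fin (k + 1)} (hab : r a b) {σ : Fin k ≃ Fin k}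
    (hσ : ∀ j, r (a.succAbove j) (b.succAbove (σ j))) :
    ∃ τ : Fin (k + 1) ≃ Fin (k + 1), ∀ j, r j (τ j) := by
  refine ⟨(finSuccEquiv' a).trans (σ.optionCongr.trans (finSuccEquiv' b).symm), fun j => ?_⟩
  induction j using Fin.succAboveCases a <;> simp [hab, hσ]

end KrullSchmidt

/-- **Uniqueness in the Krull–Schmidt decomposition for equivalence**: if a direct sum
of tuples `P₁ ⊕ ⋯ ⊕ P_k`, each indecomposable with respect to equivalence, is equivalent
to a direct sum `Q₁ ⊕ ⋯ ⊕ Q_l` of indecomposable tuples, then `k = l` and there is a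
permutation `σ` with `P_i` equivalent to `Q_{σ(i)}` for every `i`. -/
theorem tuple_direct_sum_decomposition_unique
    {F : Type*} [Field F] {t k l : ℕ}
    (ms ns : Fin k → ℕ) (ms' ns' : Fin l → ℕ)
    (P : ∀ j, Fin t → Matrix (Fin (ms j)) (Fin (ns j)) F)
    (Q : ∀ j, Fin t → Matrix (Fin (ms' j)) (Fin (ns' j)) F)
    (hP : ∀ j, TupleIndecomposable (P j))
    (hQ : ∀ j, TupleIndecomposable (Q j))
    (h : TuplesEquiv (fun i => Matrix.blockDiagonal' (fun j => P j i))
      (fun i => Matrix.blockDiagonal' (fun j => Q j i))) :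
    k = l ∧ ∃ σ : Fin k ≃ Fin l, ∀ j, TuplesEquiv (P j) (Q (σ j)) := by
  induction k generalizing l with
  | zero =>
    have := (isEmpty_iff_of_tuplesEquiv_blockDiagonal' hP hQ h).1 inferInstance
    obtain rfl : l = 0 := Nat.eq_zero_of_not_pos fun hl => this.elim ⟨0, hl⟩
    exact ⟨rfl, Equiv.refl _, finZeroElim⟩
  | succ k ih =>
    obtain ⟨l, rfl⟩ : ∃ l', l = l' + 1 := Nat.exists_eq_succ_of_ne_zero fun hl => by
      subst hl
      exact ((isEmpty_iff_of_tuplesEquiv_blockDiagonal' hP hQ h).2 inferInstance).elim 0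
    obtain ⟨f, g, hf, hg, hφ⟩ := tuplesEquiv_iff_exists_isTupleHom.1 h
    obtain ⟨b, hfb, hgb⟩ :=
      exists_hasInverse_block_of_isTupleHom_blockDiagonal' (hP 0) hQ hf hg hφ
    obtain ⟨rfl, σ, hσ⟩ := ih _ _ _ _ _ _ (fun _ => hP _) (fun _ => hQ _)
      (tuplesEquiv_blockDiagonal'_succAbove hf hg hφ hfb hgb)
    exact ⟨rfl, Fin.exists_equiv_forall_of_succAbove (r := fun j c => TuplesEquiv (P j) (Q c))
      (tuplesEquiv_iff_exists_isTupleHom.2 ⟨_, _, hfb, hgb, hφ.blockDiagonal'_block 0 b⟩) hσ⟩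
end

section
/- Let F be a field, n ≥ 1, and let A, B be n×n matrices over F. Define a multiplication on the vector space F^{2+n} by u·v = (u''ᵀAv'', u''ᵀBv'', 0, …, 0), where u'' ∈ Fⁿ denotes the vector of the last n coordinates of u. Then this multiplication is F-bilinear and associative, every product of three elements is zero (so R³ = 0 for the resulting algebra R), the span R² of all products u·v is contained in the span of the first two coordinate vectors, and dim R² = 2 if and only if A and B are linearly independent over F. -/
open Matrix

/-- The last `n` coordinates of a vector in `F^(2+n)`. -/
def tailCoords {F : Type*} {n : ℕ} (u : Fin (2 + n) → F) : Fin n → F :=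
  fun j => u (Fin.natAdd 2 j)

/-- The multiplication `u·v = (u''ᵀ A v'', u''ᵀ B v'', 0, …, 0)` on `F^(2+n)`, where
`u''` is the vector of the last `n` coordinates of `u`. -/
def amul {F : Type*} [Field F] {n : ℕ} (A B : Matrix (Fin n) (Fin n) F)
    (u v : Fin (2 + n) → F) : Fin (2 + n) → F :=
  Fin.append ![tailCoords u ⬝ᵥ A *ᵥ tailCoords v, tailCoords u ⬝ᵥ B *ᵥ tailCoords v]
    (0 : Fin n → F)

/-! Write `u·v = ι (M (u'' ⊗ v''))`, where `M` is the `2 × n²` matrix whose rows are `A` and `B`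
flattened and `ι : F² → F^(2+n)` pads with zeros. Products have zero tail, so every product with
a product as a factor vanishes. The tensors `u'' ⊗ v''` include the standard basis of `F^(n²)`,
so `R²` is `ι` of the column space of `M`; its dimension is the rank of `M`, which is `2` exactly
when the rows `A`, `B` are linearly independent. -/

def appendZeroₗ (R : Type*) [Semiring R] (m n : ℕ) : (Fin m → R) →ₗ[R] (Fin (m + n) → R) where
  toFun x := Fin.append x 0
  map_add' x y := by ext i; refine Fin.addCases (fun j => ?_) (fun j => ?_) i <;> simp
  map_smul' c x := by ext i; refine Fin.addCases (fun j => ?_) (fun j => ?_) i <;> simp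

section AppendZero

variable {R : Type*} [Semiring R] {m n : ℕ}

theorem appendZeroₗ_injective : Function.Injective (appendZeroₗ R m n) := fun x y h => by
  funext i; simpa [appendZeroₗ] using congrFun h (Fin.castAdd n i)

theorem appendZeroₗ_single (k : Fin m) (c : R) :
    appendZeroₗ R m n (Pi.single k c) = Pi.single (Fin.castAdd n k) c := by
  ext i; refine Fin.addCases (fun j => ?_) (fun j => ?_) i
  · by_cases h : j = k <;> simp [appendZeroₗ, h]
  · have : Fin.natAdd m j ≠ Fin.castAdd n k := by simp [Fin.ext_iff]; omega
    simp [appendZeroₗ, this]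

theorem tailCoords_appendZeroₗ (x : Fin 2 → R) : tailCoords (appendZeroₗ R 2 n x) = 0 := by
  ext j; simp [tailCoords, appendZeroₗ]

theorem range_appendZeroₗ_le_span_single :
    LinearMap.range (appendZeroₗ R 2 n) ≤
      Submodule.span R {Pi.single (Fin.castAdd n 0) 1, Pi.single (Fin.castAdd n 1) 1} := by
  rintro _ ⟨x, rfl⟩
  rw [pi_eq_sum_univ' x, map_sum]
  refine Submodule.sum_mem _ fun k _ => ?_
  rw [map_smul, appendZeroₗ_single]
  refine Submodule.smul_mem _ _ (Submodule.subset_span ?_)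
  fin_cases k
  exacts [Or.inl rfl, Or.inr rfl]

end AppendZero

section FlatPair

variable {R : Type*} [CommSemiring R] {ι κ : Type*}

def flatPairMatrix (A B : Matrix ι κ R) : Matrix (Fin 2) (ι × κ) R :=
  of fun k p => ![A, B] k p.1 p.2

theorem linearIndependent_row_flatPairMatrix (A B : Matrix ι κ R) :
    LinearIndependent R (flatPairMatrix A B).row ↔ LinearIndependent R ![A, B] := by
  have : (flatPairMatrix A B).row = (LinearEquiv.curry R R ι κ).symm ∘ ![A, B] := by
    ext k p; fin_cases k <;> rfl
  rw [this]
  exact (LinearEquiv.curry R R ι κ).symm.toLinearMap.linearIndependent_iff_of_injOn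
    (LinearEquiv.injective _).injOn

variable [Fintype ι] [Fintype κ]

theorem dotProduct_mulVec_eq_sum_prod (A : Matrix ι κ R) (x : ι → R) (y : κ → R) :
    x ⬝ᵥ A *ᵥ y = ∑ p : ι × κ, A p.1 p.2 * (x p.1 * y p.2) := by
  simp only [dotProduct, mulVec, Finset.mul_sum, Fintype.sum_prod_type]
  exact Finset.sum_congr rfl fun i _ => Finset.sum_congr rfl fun j _ => by ring

theorem flatPairMatrix_mulVec (A B : Matrix ι κ R) (x : ι → R) (y : κ → R) :
    flatPairMatrix A B *ᵥ (fun p => x p.1 * y p.2) = ![x ⬝ᵥ A *ᵥ y, x ⬝ᵥ B *ᵥ y] := by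
  ext k
  fin_cases k <;> exact (dotProduct_mulVec_eq_sum_prod _ _ _).symm

end FlatPair

theorem Matrix.rank_eq_card_iff_linearIndependent_row {K m n : Type*} [Field K] [Fintype m]
    [Fintype n] (M : Matrix m n K) : M.rank = Fintype.card m ↔ LinearIndependent K M.row := by
  rw [rank_eq_finrank_span_row, linearIndependent_iff_card_eq_finrank_span, eq_comm]
  rfl

section Amul

variable {F : Type*} [Field F] {n : ℕ} (A B : Matrix (Fin n) (Fin n) F)

theorem amul_eq_appendZeroₗ (u v : Fin (2 + n) → F) :
    amul A B u v = appendZeroₗ F 2 n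
      (flatPairMatrix A B *ᵥ fun p => tailCoords u p.1 * tailCoords v p.2) := by
  rw [flatPairMatrix_mulVec]; rfl

theorem amul_add_smul_left (a b : F) (u u' v : Fin (2 + n) → F) :
    amul A B (a • u + b • u') v = a • amul A B u v + b • amul A B u' v := by
  simp only [amul_eq_appendZeroₗ, ← map_smul, ← map_add, ← mulVec_smul, ← mulVec_add]
  congr 2
  ext p
  simp only [tailCoords, Pi.add_apply, Pi.smul_apply, smul_eq_mul]
  ring

theorem amul_add_smul_right (a b : F) (u v v' : Fin (2 + n) → F) :
    amul A B u (a • v + b • v') = a • amul A B u v + b • amul A B u v' := by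
  simp only [amul_eq_appendZeroₗ, ← map_smul, ← map_add, ← mulVec_smul, ← mulVec_add]
  congr 2
  ext p
  simp only [tailCoords, Pi.add_apply, Pi.smul_apply, smul_eq_mul]
  ring

theorem tailCoords_amul (u v : Fin (2 + n) → F) : tailCoords (amul A B u v) = 0 := by
  rw [amul_eq_appendZeroₗ, tailCoords_appendZeroₗ]

theorem amul_eq_zero_of_tailCoords_left {u : Fin (2 + n) → F} (hu : tailCoords u = 0)
    (v : Fin (2 + n) → F) : amul A B u v = 0 := by
  simp [amul_eq_appendZeroₗ, hu, ← Pi.zero_def]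

theorem amul_eq_zero_of_tailCoords_right {v : Fin (2 + n) → F} (hv : tailCoords v = 0)
    (u : Fin (2 + n) → F) : amul A B u v = 0 := by
  simp [amul_eq_appendZeroₗ, hv, ← Pi.zero_def]

theorem span_range_amul :
    Submodule.span F {x : Fin (2 + n) → F | ∃ u v, amul A B u v = x} =
      (Submodule.span F (Set.range (flatPairMatrix A B).col)).map (appendZeroₗ F 2 n) := by
  apply le_antisymm
  · refine Submodule.span_le.mpr ?_
    rintro _ ⟨u, v, rfl⟩
    rw [amul_eq_appendZeroₗ, ← range_mulVecLin]
    exact Submodule.mem_map_of_mem (LinearMap.mem_range_self _ _)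
  · rw [Submodule.map_span, Submodule.span_le]
    rintro _ ⟨_, ⟨⟨i, j⟩, rfl⟩, rfl⟩
    refine Submodule.subset_span ⟨Fin.append 0 (Pi.single i 1), Fin.append 0 (Pi.single j 1), ?_⟩
    have htail (x : Fin n → F) : tailCoords (Fin.append (0 : Fin 2 → F) x) = x := by
      ext k; simp [tailCoords]
    rw [amul_eq_appendZeroₗ, htail, htail]
    have hsingle : (fun p : Fin n × Fin n =>
        (Pi.single i 1 : Fin n → F) p.1 * (Pi.single j 1 : Fin n → F) p.2) =
          Pi.single (i, j) 1 := by
      ext ⟨k, l⟩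
      by_cases hk : k = i <;> by_cases hl : l = j <;> simp [hk, hl]
    rw [hsingle, mulVec_single_one]

theorem finrank_span_range_amul :
    Module.finrank F (Submodule.span F {x : Fin (2 + n) → F | ∃ u v, amul A B u v = x}) =
      (flatPairMatrix A B).rank := by
  rw [span_range_amul, rank_eq_finrank_span_cols]
  exact (Submodule.equivMapOfInjective _ appendZeroₗ_injective _).finrank_eq.symm

end Amul

/-- The multiplication `u·v = (u''ᵀ A v'', u''ᵀ B v'', 0, …, 0)` on `F^(2+n)` is
bilinear and associative, all products of three elements vanish (`R³ = 0`), the span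
`R²` of all products is contained in the span of the first two coordinate vectors, and
`dim R² = 2` iff `A` and `B` are linearly independent. -/
theorem amul_algebra_properties
    {F : Type*} [Field F] {n : ℕ} (A B : Matrix (Fin n) (Fin n) F) :
    (∀ (a b : F) (u u' v : Fin (2 + n) → F),
      amul A B (a • u + b • u') v = a • amul A B u v + b • amul A B u' v) ∧
    (∀ (a b : F) (u v v' : Fin (2 + n) → F),
      amul A B u (a • v + b • v') = a • amul A B u v + b • amul A B u v') ∧
    (∀ u v w : Fin (2 + n) → F, amul A B (amul A B u v) w = amul A B u (amul A B v w)) ∧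
    (∀ u v w : Fin (2 + n) → F, amul A B (amul A B u v) w = 0) ∧
    (∀ u v w : Fin (2 + n) → F, amul A B u (amul A B v w) = 0) ∧
    (Submodule.span F {x : Fin (2 + n) → F | ∃ u v, amul A B u v = x} ≤
      Submodule.span F {Pi.single (⟨0, by omega⟩ : Fin (2 + n)) (1 : F),
        Pi.single (⟨1, by omega⟩ : Fin (2 + n)) (1 : F)}) ∧
    (Module.finrank F
        (Submodule.span F {x : Fin (2 + n) → F | ∃ u v, amul A B u v = x}) = 2 ↔
      ∀ a b : F, a • A + b • B = 0 → a = 0 ∧ b = 0) := by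
  have triple_left u v w : amul A B (amul A B u v) w = 0 :=
    amul_eq_zero_of_tailCoords_left A B (tailCoords_amul A B u v) w
  have triple_right u v w : amul A B u (amul A B v w) = 0 :=
    amul_eq_zero_of_tailCoords_right A B (tailCoords_amul A B v w) u
  refine ⟨amul_add_smul_left A B, amul_add_smul_right A B,
    fun u v w => (triple_left u v w).trans (triple_right u v w).symm,
    triple_left, triple_right, ?_, ?_⟩
  · rw [span_range_amul]
    exact LinearMap.map_le_range.trans range_appendZeroₗ_le_span_single
  · rw [finrank_span_range_amul, ← LinearIndependent.pair_iff,
      ← linearIndependent_row_flatPairMatrix, ← rank_eq_card_iff_linearIndependent_row,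
      Fintype.card_fin]
end

section
/- Let F be a field and let R be a finite-dimensional associative F-algebra without identity such that R³ = 0 and dim R² = 2. Set n := dim R − 2. Then there exist linearly independent n×n matrices A and B over F such that R is isomorphic as an F-algebra to the algebra on F^{2+n} with multiplication u·v = (u''ᵀAv'', u''ᵀBv'', 0, …, 0), where u'' denotes the vector of the last n coordinates of u. -/
open Matrix

/-- `Fin.append` as a linear equivalence. -/
def appendLE (F : Type*) [Field F] (m n : ℕ) :
    ((Fin m → F) × (Fin n → F)) ≃ₗ[F] (Fin (m + n) → F) where
  toFun p := Fin.append p.1 p.2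
  invFun f := (fun i => f (Fin.castAdd n i), fun j => f (Fin.natAdd m j))
  map_add' p q := by
    funext k
    refine Fin.addCases (fun i => ?_) (fun j => ?_) k <;>
      simp [Fin.append_left, Fin.append_right]
  map_smul' a p := by
    funext k
    refine Fin.addCases (fun i => ?_) (fun j => ?_) k <;>
      simp [Fin.append_left, Fin.append_right]
  left_inv p := by
    ext k
    · simp [Fin.append_left]
    · simp [Fin.append_right]
  right_inv f := by
    funext k
    refine Fin.addCases (fun i => ?_) (fun j => ?_) k <;>
      simp [Fin.append_left, Fin.append_right]

/-- **Lemma 5 (existence part)**: every finite-dimensional non-unital associative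
`F`-algebra `R` with `R³ = 0` and `dim R² = 2` is isomorphic, with `n := dim R - 2`, to
the algebra on `F^(2+n)` whose multiplication is
`u·v = (u''ᵀ A v'', u''ᵀ B v'', 0, …, 0)` for some linearly independent `n × n`
matrices `A` and `B`. -/
theorem algebra_cube_zero_iso_matrix_pair_algebra
    {F : Type*} [Field F] {R : Type*} [NonUnitalRing R] [Module F R]
    [SMulCommClass F R R] [IsScalarTower F R R] [FiniteDimensional F R]
    (h3 : ∀ u v w : R, u * v * w = 0)
    (h2 : Module.finrank F (Submodule.span F {x : R | ∃ u v : R, u * v = x}) = 2) :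
    ∃ A B : Matrix (Fin (Module.finrank F R - 2)) (Fin (Module.finrank F R - 2)) F,
      (∀ a b : F, a • A + b • B = 0 → a = 0 ∧ b = 0) ∧
      ∃ e : R ≃ₗ[F] (Fin (2 + (Module.finrank F R - 2)) → F),
        ∀ u v : R, e (u * v) = amul A B (e u) (e v) := by
  classical
  set n := Module.finrank F R - 2 with hn
  set S : Submodule F R := Submodule.span F {x : R | ∃ u v : R, u * v = x} with hSdef
  have hmemS : ∀ u v : R, u * v ∈ S := fun u v => Submodule.subset_span ⟨u, v, rfl⟩
  have hSl : ∀ s ∈ S, ∀ w : R, s * w = 0 := by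
    intro s hs w
    induction hs using Submodule.span_induction with
    | mem x hx => obtain ⟨u, v, rfl⟩ := hx; exact h3 u v w
    | zero => simp
    | add x y _ _ hx hy => rw [add_mul, hx, hy, add_zero]
    | smul c x _ hx => rw [smul_mul_assoc, hx, smul_zero]
  have hSr : ∀ s ∈ S, ∀ w : R, w * s = 0 := by
    intro s hs w
    induction hs using Submodule.span_induction with
    | mem x hx => obtain ⟨u, v, rfl⟩ := hx; rw [← mul_assoc]; exact h3 w u v
    | zero => simp
    | add x y _ _ hx hy => rw [mul_add, hx, hy, add_zero]
    | smul c x _ hx => rw [mul_smul_comm, hx, smul_zero]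
  obtain ⟨T, hT⟩ := Submodule.exists_isCompl S
  have hTrank : Module.finrank F T = n := by
    have h := Submodule.finrank_add_eq_of_isCompl hT
    omega
  let bS : Module.Basis (Fin 2) F S := (Module.finBasis F S).reindex (finCongr h2)
  let bT : Module.Basis (Fin n) F T := (Module.finBasis F T).reindex (finCongr hTrank)
  let cS := bS.equivFun
  let cT := bT.equivFun
  let pS : R →ₗ[F] S := S.projectionOnto T hT
  let pT : R →ₗ[F] T := T.projectionOnto S hT.symm
  have hdec : ∀ u : R, (pS u : R) + (pT u : R) = u := fun u =>
    Submodule.projection_add_projection_eq_self hT u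
  let x : Fin n → R := fun i => (bT i : R)
  have hx : ∀ u : R, (pT u : R) = ∑ i, cT (pT u) i • x i := by
    intro u
    conv_lhs => rw [← bT.sum_equivFun (pT u)]
    push_cast
    rfl
  have key : ∀ u v : R,
      u * v = ∑ i, ∑ j, (cT (pT u) i * cT (pT v) j) • (x i * x j) := by
    intro u v
    have h1 : u * v = (pT u : R) * (pT v : R) := by
      conv_lhs => rw [← hdec u, ← hdec v]
      rw [add_mul, hSl _ (pS u).2, zero_add, mul_add, hSr _ (pS v).2, zero_add]
    rw [h1, hx u, hx v, Finset.sum_mul]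
    refine Finset.sum_congr rfl fun i _ => ?_
    rw [Finset.mul_sum]
    refine Finset.sum_congr rfl fun j _ => ?_
    rw [smul_mul_assoc, mul_smul_comm, smul_smul]
  let P : Fin n → Fin n → S := fun i j => ⟨x i * x j, hmemS _ _⟩
  let A : Matrix (Fin n) (Fin n) F := Matrix.of fun i j => cS (P i j) 0
  let B : Matrix (Fin n) (Fin n) F := Matrix.of fun i j => cS (P i j) 1
  have hA : ∀ i j, A i j = cS (P i j) 0 := fun i j => rfl
  have hB : ∀ i j, B i j = cS (P i j) 1 := fun i j => rfl
  have keyS : ∀ u v : R, (⟨u * v, hmemS u v⟩ : S) =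
      ∑ i, ∑ j, (cT (pT u) i * cT (pT v) j) • P i j := by
    intro u v
    apply Subtype.ext
    push_cast
    exact key u v
  have hcoord : ∀ (u v : R) (k : Fin 2),
      cS ⟨u * v, hmemS u v⟩ k =
        ∑ i, ∑ j, cT (pT u) i * cT (pT v) j * cS (P i j) k := by
    intro u v k
    rw [keyS u v]
    simp [map_sum, _root_.map_smul, Finset.sum_apply, Pi.smul_apply, smul_eq_mul]
  let e : R ≃ₗ[F] (Fin (2 + n) → F) :=
    ((Submodule.prodEquivOfIsCompl S T hT).symm.trans (cS.prodCongr cT)).trans (appendLE F 2 n)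
  have he : ∀ u : R, e u = Fin.append (cS (pS u)) (cT (pT u)) := by
    intro u
    have happ : (Submodule.prodEquivOfIsCompl S T hT) (pS u, pT u) = u := by
      have h := DFunLike.congr_fun (Submodule.coe_prodEquivOfIsCompl S T hT) (pS u, pT u)
      simpa [LinearMap.coprod_apply] using h.trans (hdec u)
    have hsymm : (Submodule.prodEquivOfIsCompl S T hT).symm u = (pS u, pT u) :=
      (LinearEquiv.symm_apply_eq _).mpr happ.symm
    show (appendLE F 2 n) ((cS.prodCongr cT) ((Submodule.prodEquivOfIsCompl S T hT).symm u)) = _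
    rw [hsymm]
    rfl
  have htail : ∀ u : R, tailCoords (e u) = cT (pT u) := by
    intro u
    funext j
    show (e u) (Fin.natAdd 2 j) = _
    rw [he u]
    exact Fin.append_right _ _ j
  have hemul : ∀ u v : R, e (u * v) = Fin.append (cS ⟨u * v, hmemS u v⟩) 0 := by
    intro u v
    rw [he]
    have h1 : pS (u * v) = ⟨u * v, hmemS u v⟩ :=
      Submodule.projectionOnto_apply_left hT ⟨u * v, hmemS u v⟩
    have h2' : pT (u * v) = 0 :=
      Submodule.projectionOnto_apply_right hT.symm (⟨u * v, hmemS u v⟩ : S)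
    rw [h1, h2', map_zero]
  have hdot : ∀ (M : Matrix (Fin n) (Fin n) F) (c d : Fin n → F),
      c ⬝ᵥ M *ᵥ d = ∑ i, ∑ j, c i * d j * M i j := by
    intro M c d
    simp only [dotProduct, mulVec]
    refine Finset.sum_congr rfl fun i _ => ?_
    rw [Finset.mul_sum]
    refine Finset.sum_congr rfl fun j _ => ?_
    ring
  refine ⟨A, B, ?_, e, ?_⟩
  · intro a b hab
    have hentry : ∀ i j, a * cS (P i j) 0 + b * cS (P i j) 1 = 0 := by
      intro i j
      have h := congrFun (congrFun hab i) j
      simpa [hA, hB, Matrix.add_apply, Matrix.smul_apply, smul_eq_mul] using h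
    let ψ : R →ₗ[F] F :=
      ((a • LinearMap.proj 0 + b • LinearMap.proj 1 : (Fin 2 → F) →ₗ[F] F)).comp
        (cS.toLinearMap.comp pS)
    have hψ : ∀ r : R, ψ r = a * cS (pS r) 0 + b * cS (pS r) 1 := fun r => rfl
    have hψprod : ∀ u v : R, ψ (u * v) = 0 := by
      intro u v
      rw [hψ]
      have h1 : pS (u * v) = ⟨u * v, hmemS u v⟩ :=
        Submodule.projectionOnto_apply_left hT ⟨u * v, hmemS u v⟩
      rw [h1, hcoord u v 0, hcoord u v 1, Finset.mul_sum, Finset.mul_sum,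
        ← Finset.sum_add_distrib]
      refine Finset.sum_eq_zero fun i _ => ?_
      rw [Finset.mul_sum, Finset.mul_sum, ← Finset.sum_add_distrib]
      refine Finset.sum_eq_zero fun j _ => ?_
      linear_combination (cT (pT u) i * cT (pT v) j) * hentry i j
    have hψS : ∀ s ∈ S, ψ s = 0 := by
      intro s hs
      induction hs using Submodule.span_induction with
      | mem y hy => obtain ⟨u, v, rfl⟩ := hy; exact hψprod u v
      | zero => simp
      | add y z _ _ hy hz => rw [map_add, hy, hz, add_zero]
      | smul c y _ hy => rw [_root_.map_smul, hy, smul_zero]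
    constructor
    · have h0 := hψS (cS.symm (Pi.single 0 1) : S) (cS.symm (Pi.single 0 1) : S).2
      rw [hψ] at h0
      rw [Submodule.projectionOnto_apply_left hT (cS.symm (Pi.single 0 1))] at h0
      simpa [Pi.single_eq_same, Pi.single_eq_of_ne] using h0
    · have h0 := hψS (cS.symm (Pi.single 1 1) : S) (cS.symm (Pi.single 1 1) : S).2
      rw [hψ] at h0
      rw [Submodule.projectionOnto_apply_left hT (cS.symm (Pi.single 1 1))] at h0
      simpa [Pi.single_eq_same, Pi.single_eq_of_ne] using h0
  · intro u v
    have hcomp : cS ⟨u * v, hmemS u v⟩ =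
        ![cT (pT u) ⬝ᵥ A *ᵥ cT (pT v), cT (pT u) ⬝ᵥ B *ᵥ cT (pT v)] := by
      funext k
      fin_cases k
      · simp only [Fin.mk_zero, Matrix.cons_val_zero]
        rw [hdot, hcoord u v]
        exact Finset.sum_congr rfl fun i _ => Finset.sum_congr rfl fun j _ => by rw [hA]
      · simp only [Fin.mk_one, Matrix.cons_val_one, Matrix.head_cons]
        rw [hdot, hcoord u v]
        exact Finset.sum_congr rfl fun i _ => Finset.sum_congr rfl fun j _ => by rw [hB]
    rw [hemul u v]
    show Fin.append (cS ⟨u * v, hmemS u v⟩) 0 =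
      Fin.append ![tailCoords (e u) ⬝ᵥ A *ᵥ tailCoords (e v),
                   tailCoords (e u) ⬝ᵥ B *ᵥ tailCoords (e v)] 0
    rw [htail u, htail v, hcomp]
end

section
/- Let F be a field, n ≥ 1, and for linearly independent n×n matrices A, B over F let R(A,B) denote the algebra on F^{2+n} with multiplication u·v = (u''ᵀAv'', u''ᵀBv'', 0, …, 0), where u'' denotes the vector of the last n coordinates of u. Then for linearly independent pairs (A,B) and (C,D) of n×n matrices, the algebras R(A,B) and R(C,D) are isomorphic as F-algebras if and only if there exist an invertible n×n matrix S and an invertible 2×2 matrix [r_ij] over F such that SᵀAS = r₁₁C + r₁₂D and SᵀBS = r₂₁C + r₂₂D. -/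
open Matrix

/-!
The products of `R(A,B)` span the subspace `H = {u'' = 0}` as soon as `A, B` are independent:
a linear form `(a, b)` on `F²` vanishing on every `(xᵀAy, xᵀBy)` gives `aA + bB = 0`.
An isomorphism `e` maps the span of products onto the span of products, so `e⁻¹` maps `H` into
`H`, and onto `H` for dimension reasons. Hence `e⁻¹ : R(C,D) → R(A,B)` is block triangular for
`F^(2+n) = F² ⊕ Fⁿ`, and evaluating `e⁻¹ (u·v) = e⁻¹ u · e⁻¹ v` on vectors with vanishing head
shows that its diagonal blocks `r` and `S` satisfy `r (xᵀCy, xᵀDy) = ((Sx)ᵀA(Sy), (Sx)ᵀB(Sy))`,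
which is the congruence. Conversely, the block diagonal map
`diag(r, S)` is then an isomorphism `R(C,D) → R(A,B)`.
-/

namespace MatrixPairAlgebra

theorem _root_.Equiv.symm_map_of_map {M N : Type*} (e : M ≃ N) {μ : M → M → M}
    {ν : N → N → N} (h : ∀ u v, e (μ u v) = ν (e u) (e v)) (u v : N) :
    e.symm (ν u v) = μ (e.symm u) (e.symm v) := by
  rw [e.symm_apply_eq, h, e.apply_symm_apply, e.apply_symm_apply]

section PairForm

variable {R ι : Type*} [CommRing R] [Fintype ι]

def pairForm (A B : Matrix ι ι R) (x y : ι → R) : Fin 2 → R :=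
  ![x ⬝ᵥ A *ᵥ y, x ⬝ᵥ B *ᵥ y]

theorem ext_of_dotProduct_mulVec [DecidableEq ι] {M N : Matrix ι ι R}
    (h : ∀ x y, x ⬝ᵥ M *ᵥ y = x ⬝ᵥ N *ᵥ y) : M = N :=
  (Matrix.toLinearMap₂' R).injective <| LinearMap.ext₂ fun x y => by
    rw [Matrix.toLinearMap₂'_apply', Matrix.toLinearMap₂'_apply', h]

theorem dotProduct_smul_add_smul_mulVec (a b : R) (A B : Matrix ι ι R) (x y : ι → R) :
    x ⬝ᵥ (a • A + b • B) *ᵥ y = a * (x ⬝ᵥ A *ᵥ y) + b * (x ⬝ᵥ B *ᵥ y) := by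
  simp only [Matrix.add_mulVec, Matrix.smul_mulVec, dotProduct_add, dotProduct_smul, smul_eq_mul]

theorem mulVec_dotProduct_mulVec_mulVec (S M : Matrix ι ι R) (x y : ι → R) :
    S *ᵥ x ⬝ᵥ M *ᵥ (S *ᵥ y) = x ⬝ᵥ (Sᵀ * M * S) *ᵥ y := by
  rw [← Matrix.mulVec_mulVec, ← Matrix.mulVec_mulVec, Matrix.dotProduct_mulVec x,
    Matrix.vecMul_transpose]

theorem pairForm_injective [DecidableEq ι] {A B C D : Matrix ι ι R}
    (h : ∀ x y, pairForm A B x y = pairForm C D x y) : A = C ∧ B = D :=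
  ⟨ext_of_dotProduct_mulVec fun x y => congrFun (h x y) 0,
    ext_of_dotProduct_mulVec fun x y => congrFun (h x y) 1⟩

theorem pairForm_mulVec (A B S : Matrix ι ι R) (x y : ι → R) :
    pairForm A B (S *ᵥ x) (S *ᵥ y) = pairForm (Sᵀ * A * S) (Sᵀ * B * S) x y := by
  simp only [pairForm, mulVec_dotProduct_mulVec_mulVec]

theorem mulVec_pairForm (r : Matrix (Fin 2) (Fin 2) R) (C D : Matrix ι ι R) (x y : ι → R) :
    r *ᵥ pairForm C D x y = pairForm (r 0 0 • C + r 0 1 • D) (r 1 0 • C + r 1 1 • D) x y := by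
  simp only [pairForm, Matrix.mulVec_fin_two, dotProduct_smul_add_smul_mulVec,
    Matrix.cons_val_zero, Matrix.cons_val_one]

theorem mulVec_pairForm_eq_iff [DecidableEq ι] (A B C D S : Matrix ι ι R)
    (r : Matrix (Fin 2) (Fin 2) R) :
    (∀ x y, r *ᵥ pairForm C D x y = pairForm A B (S *ᵥ x) (S *ᵥ y)) ↔
      Sᵀ * A * S = r 0 0 • C + r 0 1 • D ∧ Sᵀ * B * S = r 1 0 • C + r 1 1 • D := by
  simp only [mulVec_pairForm, pairForm_mulVec]
  constructor
  · intro h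
    obtain ⟨hA, hB⟩ := pairForm_injective h
    exact ⟨hA.symm, hB.symm⟩
  · rintro ⟨hA, hB⟩ x y
    rw [hA, hB]

end PairForm

theorem span_range_pairForm {F ι : Type*} [Field F] [Fintype ι] [DecidableEq ι]
    {C D : Matrix ι ι F} (hCD : ∀ a b : F, a • C + b • D = 0 → a = 0 ∧ b = 0) :
    Submodule.span F (Set.range (Function.uncurry (pairForm C D))) = ⊤ := by
  by_contra hspan
  obtain ⟨φ, hφ, hφspan⟩ :=
    Submodule.exists_dual_map_eq_bot_of_lt_top (lt_top_iff_ne_top.2 hspan) inferInstance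
  have hφ_apply (z : Fin 2 → F) :
      φ z = z 0 * φ (Pi.single 0 1) + z 1 * φ (Pi.single 1 1) := by
    have hz : z = z 0 • Pi.single 0 1 + z 1 • Pi.single 1 1 := by
      ext i; fin_cases i <;> simp
    conv_lhs => rw [hz]
    simp only [map_add, map_smul, smul_eq_mul]
  set a := φ (Pi.single 0 1)
  set b := φ (Pi.single 1 1)
  have hab : a • C + b • D = 0 := by
    refine ext_of_dotProduct_mulVec fun x y => ?_
    have hmem : pairForm C D x y ∈
        Submodule.span F (Set.range (Function.uncurry (pairForm C D))) :=
      Submodule.subset_span ⟨(x, y), rfl⟩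
    have hφ_pairForm : φ (pairForm C D x y) = 0 := by
      simpa [hφspan] using Submodule.mem_map_of_mem (f := φ) hmem
    rw [hφ_apply] at hφ_pairForm
    simp only [pairForm, Matrix.cons_val_zero, Matrix.cons_val_one] at hφ_pairForm
    rw [dotProduct_smul_add_smul_mulVec, Matrix.zero_mulVec, dotProduct_zero]
    linear_combination hφ_pairForm
  obtain ⟨ha, hb⟩ := hCD a b hab
  exact hφ (LinearMap.ext fun z => by rw [hφ_apply, ha, hb]; simp)

def appendLinearEquiv (R : Type*) [Semiring R] (m n : ℕ) :
    ((Fin m → R) × (Fin n → R)) ≃ₗ[R] (Fin (m + n) → R) where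
  __ := Fin.appendEquiv m n
  map_add' p q := by
    ext i
    refine Fin.addCases (fun i => ?_) (fun j => ?_) i <;> simp
  map_smul' c p := by
    ext i
    refine Fin.addCases (fun i => ?_) (fun j => ?_) i <;> simp

section Coordinates

variable {F : Type*} [Field F] {n : ℕ}

def tailLinear : (Fin (2 + n) → F) →ₗ[F] (Fin n → F) :=
  LinearMap.snd F _ _ ∘ₗ (appendLinearEquiv F 2 n).symm.toLinearMap

def headLinear : (Fin (2 + n) → F) →ₗ[F] (Fin 2 → F) :=
  LinearMap.fst F _ _ ∘ₗ (appendLinearEquiv F 2 n).symm.toLinearMap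

def embedHead : (Fin 2 → F) →ₗ[F] (Fin (2 + n) → F) :=
  (appendLinearEquiv F 2 n).toLinearMap ∘ₗ LinearMap.inl F _ _

def embedTail : (Fin n → F) →ₗ[F] (Fin (2 + n) → F) :=
  (appendLinearEquiv F 2 n).toLinearMap ∘ₗ LinearMap.inr F _ _

@[simp] theorem tailLinear_apply (u : Fin (2 + n) → F) : tailLinear u = tailCoords u := rfl

@[simp] theorem tailCoords_appendLinearEquiv (p : (Fin 2 → F) × (Fin n → F)) :
    tailCoords (appendLinearEquiv F 2 n p) = p.2 := by
  ext j
  simp [tailCoords, appendLinearEquiv]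

@[simp] theorem tailCoords_embedHead (z : Fin 2 → F) :
    tailCoords (embedHead z : Fin (2 + n) → F) = 0 :=
  tailCoords_appendLinearEquiv (z, 0)

@[simp] theorem tailCoords_embedTail (x : Fin n → F) :
    tailCoords (embedTail x : Fin (2 + n) → F) = x :=
  tailCoords_appendLinearEquiv (0, x)

@[simp] theorem headLinear_embedHead (z : Fin 2 → F) :
    headLinear (embedHead z : Fin (2 + n) → F) = z := by
  simp [headLinear, embedHead]

theorem embedHead_add_embedTail (u : Fin (2 + n) → F) :
    embedHead (headLinear u) + embedTail (tailCoords u) = u := by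
  change appendLinearEquiv F 2 n (headLinear u, 0) + appendLinearEquiv F 2 n (0, tailCoords u) = u
  rw [← map_add, Prod.mk_add_mk, add_zero, zero_add]
  exact (appendLinearEquiv F 2 n).apply_symm_apply u

theorem embedHead_injective :
    Function.Injective (embedHead : (Fin 2 → F) →ₗ[F] (Fin (2 + n) → F)) :=
  fun z w h => by simpa using congrArg headLinear h

theorem amul_eq_embedHead (A B : Matrix (Fin n) (Fin n) F) (u v : Fin (2 + n) → F) :
    amul A B u v = embedHead (pairForm A B (tailCoords u) (tailCoords v)) := rfl

end Coordinates

section Square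

variable {F : Type*} [Field F] {n : ℕ}

theorem span_amul_le_ker_tailLinear (A B : Matrix (Fin n) (Fin n) F) :
    Submodule.span F (Set.range (Function.uncurry (amul A B))) ≤ LinearMap.ker tailLinear :=
  Submodule.span_le.2 <| Set.range_subset_iff.2 fun ⟨_, _⟩ => by simp [amul_eq_embedHead]

theorem ker_tailLinear_le_span_amul {A B : Matrix (Fin n) (Fin n) F}
    (hAB : ∀ a b : F, a • A + b • B = 0 → a = 0 ∧ b = 0) :
    LinearMap.ker tailLinear ≤ Submodule.span F (Set.range (Function.uncurry (amul A B))) := by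
  intro u hu
  have hu_head : u = embedHead (headLinear u) := by
    simpa [show tailCoords u = 0 from hu] using (embedHead_add_embedTail u).symm
  have hmem : headLinear u ∈ Submodule.span F (Set.range (Function.uncurry (pairForm A B))) := by
    rw [span_range_pairForm hAB]; trivial
  rw [hu_head]
  refine Submodule.span_mono ?_ (Submodule.apply_mem_span_image_of_mem_span embedHead hmem)
  rintro _ ⟨_, ⟨⟨x, y⟩, rfl⟩, rfl⟩
  exact ⟨(embedTail x, embedTail y), by simp [amul_eq_embedHead]⟩

theorem map_ker_tailLinear_of_map_amul {A B C D : Matrix (Fin n) (Fin n) F}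
    (hAB : ∀ a b : F, a • A + b • B = 0 → a = 0 ∧ b = 0)
    (e : (Fin (2 + n) → F) ≃ₗ[F] (Fin (2 + n) → F))
    (he : ∀ u v, e (amul A B u v) = amul C D (e u) (e v)) :
    (LinearMap.ker tailLinear).map e.toLinearMap = LinearMap.ker (tailLinear (F := F) (n := n)) := by
  refine Submodule.eq_of_le_of_finrank_eq ?_ (LinearEquiv.finrank_map_eq e _)
  calc (LinearMap.ker tailLinear).map e.toLinearMap
      ≤ (Submodule.span F (Set.range (Function.uncurry (amul A B)))).map e.toLinearMap :=
        Submodule.map_mono (ker_tailLinear_le_span_amul hAB)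
    _ = Submodule.span F (e '' Set.range (Function.uncurry (amul A B))) :=
        (Submodule.span_image _).symm
    _ ≤ Submodule.span F (Set.range (Function.uncurry (amul C D))) := by
        refine Submodule.span_mono ?_
        rintro _ ⟨_, ⟨⟨u, v⟩, rfl⟩, rfl⟩
        exact ⟨(e u, e v), (he u v).symm⟩
    _ ≤ LinearMap.ker tailLinear := span_amul_le_ker_tailLinear C D

end Square

section BlockTriangular

variable {F : Type*} [Field F] {n : ℕ}

def tailPart (f : (Fin (2 + n) → F) →ₗ[F] (Fin (2 + n) → F)) :
    (Fin n → F) →ₗ[F] (Fin n → F) :=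
  tailLinear ∘ₗ f ∘ₗ embedTail

def headPart (f : (Fin (2 + n) → F) →ₗ[F] (Fin (2 + n) → F)) :
    (Fin 2 → F) →ₗ[F] (Fin 2 → F) :=
  headLinear ∘ₗ f ∘ₗ embedHead

variable {f g : (Fin (2 + n) → F) →ₗ[F] (Fin (2 + n) → F)}

theorem tailCoords_map (hf : ∀ z, tailCoords (f (embedHead z)) = 0) (u : Fin (2 + n) → F) :
    tailCoords (f u) = tailPart f (tailCoords u) := by
  conv_lhs => rw [← embedHead_add_embedTail u]
  rw [map_add, ← tailLinear_apply, map_add, tailLinear_apply, tailLinear_apply, hf, zero_add]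
  rfl

theorem map_embedHead (hf : ∀ z, tailCoords (f (embedHead z)) = 0) (z : Fin 2 → F) :
    f (embedHead z) = embedHead (headPart f z) := by
  conv_lhs => rw [← embedHead_add_embedTail (f (embedHead z)), hf, map_zero, add_zero]
  rfl

theorem tailPart_comp (hf : ∀ z, tailCoords (f (embedHead z)) = 0) :
    tailPart (f ∘ₗ g) = tailPart f ∘ₗ tailPart g :=
  LinearMap.ext fun x => tailCoords_map hf (g (embedTail x))

theorem headPart_comp (hg : ∀ z, tailCoords (g (embedHead z)) = 0) :
    headPart (f ∘ₗ g) = headPart f ∘ₗ headPart g :=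
  LinearMap.ext fun z => by
    change headLinear (f (g (embedHead z))) = headLinear (f (embedHead (headPart g z)))
    rw [map_embedHead hg]

theorem tailPart_id : tailPart (LinearMap.id : (Fin (2 + n) → F) →ₗ[F] _) = LinearMap.id :=
  LinearMap.ext fun x => by simp [tailPart]

theorem headPart_id : headPart (LinearMap.id : (Fin (2 + n) → F) →ₗ[F] _) = LinearMap.id :=
  LinearMap.ext fun z => by simp [headPart]

theorem tailCoords_map_embedHead_eq_zero (e : (Fin (2 + n) → F) ≃ₗ[F] (Fin (2 + n) → F))
    (he : (LinearMap.ker tailLinear).map e.toLinearMap = LinearMap.ker tailLinear)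
    (z : Fin 2 → F) : tailCoords (e (embedHead z)) = 0 := by
  have hmem : e (embedHead z) ∈ (LinearMap.ker tailLinear).map e.toLinearMap :=
    Submodule.mem_map_of_mem (by simp)
  rwa [he] at hmem

theorem isUnit_tailPart_and_headPart (e : (Fin (2 + n) → F) ≃ₗ[F] (Fin (2 + n) → F))
    (he : (LinearMap.ker tailLinear).map e.toLinearMap = LinearMap.ker tailLinear) :
    IsUnit (tailPart e.toLinearMap) ∧ IsUnit (headPart e.toLinearMap) := by
  have hmaps := tailCoords_map_embedHead_eq_zero e he
  have hmaps_symm :=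
    tailCoords_map_embedHead_eq_zero e.symm ((Submodule.map_symm_eq_iff e).2 he)
  have comp_self_symm : e.toLinearMap ∘ₗ e.symm.toLinearMap = LinearMap.id := by simp
  have comp_symm_self : e.symm.toLinearMap ∘ₗ e.toLinearMap = LinearMap.id := by simp
  refine ⟨isUnit_iff_exists.2 ⟨tailPart e.symm.toLinearMap, ?_, ?_⟩,
    isUnit_iff_exists.2 ⟨headPart e.symm.toLinearMap, ?_, ?_⟩⟩
  · rw [Module.End.mul_eq_comp, ← tailPart_comp hmaps, comp_self_symm, tailPart_id]; rfl
  · rw [Module.End.mul_eq_comp, ← tailPart_comp hmaps_symm, comp_symm_self, tailPart_id]; rfl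
  · rw [Module.End.mul_eq_comp, ← headPart_comp hmaps_symm, comp_self_symm, headPart_id]; rfl
  · rw [Module.End.mul_eq_comp, ← headPart_comp hmaps, comp_symm_self, headPart_id]; rfl

theorem mulVec_pairForm_of_map_amul {A B C D : Matrix (Fin n) (Fin n) F}
    (hf : ∀ z, tailCoords (f (embedHead z)) = 0)
    (hmul : ∀ u v, f (amul C D u v) = amul A B (f u) (f v)) (x y : Fin n → F) :
    (headPart f).toMatrix' *ᵥ pairForm C D x y =
      pairForm A B ((tailPart f).toMatrix' *ᵥ x) ((tailPart f).toMatrix' *ᵥ y) := by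
  have h := hmul (embedTail x) (embedTail y)
  rw [amul_eq_embedHead, amul_eq_embedHead, tailCoords_embedTail, tailCoords_embedTail,
    map_embedHead hf] at h
  rw [LinearMap.toMatrix'_mulVec, LinearMap.toMatrix'_mulVec, LinearMap.toMatrix'_mulVec]
  exact embedHead_injective h

end BlockTriangular

section BlockDiagonal

variable {F : Type*} [Field F] {n : ℕ} (r : Matrix (Fin 2) (Fin 2) F)
  (S : Matrix (Fin n) (Fin n) F) [Invertible r] [Invertible S]

def blockEquiv : (Fin (2 + n) → F) ≃ₗ[F] (Fin (2 + n) → F) :=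
  (appendLinearEquiv F 2 n).symm ≪≫ₗ
    ((r.toLinearEquiv' ‹_›).prodCongr (S.toLinearEquiv' ‹_›)) ≪≫ₗ appendLinearEquiv F 2 n

theorem blockEquiv_embedHead (z : Fin 2 → F) :
    blockEquiv r S (embedHead z) = embedHead (r *ᵥ z) := by
  simp only [blockEquiv, embedHead, LinearEquiv.trans_apply, LinearMap.comp_apply,
    LinearMap.inl_apply, LinearEquiv.coe_coe, LinearEquiv.symm_apply_apply,
    LinearEquiv.prodCongr_apply, map_zero]
  rfl

theorem tailCoords_blockEquiv (u : Fin (2 + n) → F) :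
    tailCoords (blockEquiv r S u) = S *ᵥ tailCoords u := by
  rw [blockEquiv, LinearEquiv.trans_apply, LinearEquiv.trans_apply, tailCoords_appendLinearEquiv]
  rfl

variable {r S}

theorem blockEquiv_map_amul {A B C D : Matrix (Fin n) (Fin n) F}
    (h : ∀ x y, r *ᵥ pairForm C D x y = pairForm A B (S *ᵥ x) (S *ᵥ y))
    (u v : Fin (2 + n) → F) :
    blockEquiv r S (amul C D u v) = amul A B (blockEquiv r S u) (blockEquiv r S v) := by
  rw [amul_eq_embedHead, amul_eq_embedHead, blockEquiv_embedHead, tailCoords_blockEquiv,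
    tailCoords_blockEquiv, h]

end BlockDiagonal

end MatrixPairAlgebra

open MatrixPairAlgebra

theorem matrix_pair_algebras_iso_iff_congruent_substitution_general
    {F : Type*} [Field F] {n : ℕ}
    (A B C D : Matrix (Fin n) (Fin n) F)
    (hCD : ∀ a b : F, a • C + b • D = 0 → a = 0 ∧ b = 0) :
    (∃ e : (Fin (2 + n) → F) ≃ₗ[F] (Fin (2 + n) → F),
      ∀ u v, e (amul A B u v) = amul C D (e u) (e v)) ↔
    (∃ (S : Matrix (Fin n) (Fin n) F) (r : Matrix (Fin 2) (Fin 2) F),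
      IsUnit S ∧ IsUnit r ∧
      Sᵀ * A * S = r 0 0 • C + r 0 1 • D ∧
      Sᵀ * B * S = r 1 0 • C + r 1 1 • D) := by
  constructor
  · rintro ⟨e, he⟩
    have he_symm := e.toEquiv.symm_map_of_map he
    have hker := map_ker_tailLinear_of_map_amul hCD e.symm he_symm
    obtain ⟨htail, hhead⟩ := isUnit_tailPart_and_headPart e.symm hker
    exact ⟨_, _, LinearMap.isUnit_toMatrix'_iff.2 htail, LinearMap.isUnit_toMatrix'_iff.2 hhead,
      (mulVec_pairForm_eq_iff A B C D _ _).1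
        (mulVec_pairForm_of_map_amul (tailCoords_map_embedHead_eq_zero e.symm hker) he_symm)⟩
  · rintro ⟨S, r, hS, hr, hcongr⟩
    let _ := hS.invertible
    let _ := hr.invertible
    exact ⟨(blockEquiv r S).symm, (blockEquiv r S).toEquiv.symm_map_of_map
      (blockEquiv_map_amul ((mulVec_pairForm_eq_iff A B C D S r).2 hcongr))⟩

/-- **Lemma 5 (uniqueness part)**: for linearly independent pairs `(A,B)` and `(C,D)`
of `n × n` matrices, the algebras `R(A,B)` and `R(C,D)` on `F^(2+n)` with
multiplications `amul A B` and `amul C D` are isomorphic if and only if there exist an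
invertible `n × n` matrix `S` and an invertible `2 × 2` matrix `[rᵢⱼ]` with
`SᵀAS = r₁₁C + r₁₂D` and `SᵀBS = r₂₁C + r₂₂D`. -/
theorem matrix_pair_algebras_iso_iff_congruent_substitution
    {F : Type*} [Field F] {n : ℕ} (hn : 1 ≤ n)
    (A B C D : Matrix (Fin n) (Fin n) F)
    (hAB : ∀ a b : F, a • A + b • B = 0 → a = 0 ∧ b = 0)
    (hCD : ∀ a b : F, a • C + b • D = 0 → a = 0 ∧ b = 0) :
    (∃ e : (Fin (2 + n) → F) ≃ₗ[F] (Fin (2 + n) → F),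
      ∀ u v, e (amul A B u v) = amul C D (e u) (e v)) ↔
    (∃ (S : Matrix (Fin n) (Fin n) F) (r : Matrix (Fin 2) (Fin 2) F),
      IsUnit S ∧ IsUnit r ∧
      Sᵀ * A * S = r 0 0 • C + r 0 1 • D ∧
      Sᵀ * B * S = r 1 0 • C + r 1 1 • D) :=
  matrix_pair_algebras_iso_iff_congruent_substitution_general A B C D hCD
end

section
/- Let F be a field of characteristic not 2 and let A, B, C, D, S₀ be n×n matrices over F with S₀ invertible, S₀⁻¹AS₀ = C and S₀⁻¹BS₀ = D. With P(A,B) = (M₁, M₂(A,B)) defined by M₁ := I₂₀ ⊕ 0₁₀ ⊕ I₁ ⊕ M and M₂(A,B) := 0₂₀ ⊕ I₁₀ ⊕ I₁ ⊕ N₀(A,B), where (M, N₀(A,B)) = T₀(A,B), the pair P(A,B) is congruent to P(C,D): there is an invertible (31+4n)×(31+4n) matrix R with RᵀM₁R = M₁ and RᵀM₂(A,B)R = M₂(C,D). -/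
open Matrix

/-- Index type for the `(31+4n) × (31+4n)` matrices of the pair `P(A,B)`. -/
abbrev PIdx (n : ℕ) := Fin 20 ⊕ (Fin 10 ⊕ (Fin 1 ⊕ Blk n))

instance (n : ℕ) : Fintype (PIdx n) := inferInstance
instance (n : ℕ) : DecidableEq (PIdx n) := inferInstance

/-- The second matrix `N_ε(A,B)` of the pair `T_ε(A,B)`, with block rows
`(0,0,A,0), (0,0,0,B), (εAᵀ,0,0,0), (0,εBᵀ,0,0)`. -/
noncomputable def Nblock {F : Type*} [Field F] {n : ℕ} (ε : F)
    (A B : Matrix (Fin n) (Fin n) F) : Matrix (Blk n) (Blk n) F :=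
  Matrix.fromBlocks 0 (Matrix.fromBlocks A 0 0 B)
    (Matrix.fromBlocks (ε • Aᵀ) 0 0 (ε • Bᵀ)) 0

/-- `M₁ := I₂₀ ⊕ 0₁₀ ⊕ I₁ ⊕ M`, the first matrix of the pair `P(A,B)`. -/
noncomputable def P1 (F : Type*) [Field F] (n : ℕ) : Matrix (PIdx n) (PIdx n) F :=
  Matrix.fromBlocks 1 0 0
    (Matrix.fromBlocks 0 0 0 (Matrix.fromBlocks 1 0 0 (Mblock F n)))

/-- `M₂(A,B) := 0₂₀ ⊕ I₁₀ ⊕ I₁ ⊕ N₀(A,B)`, the second matrix of the pair `P(A,B)`. -/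
noncomputable def P2 {F : Type*} [Field F] {n : ℕ}
    (A B : Matrix (Fin n) (Fin n) F) : Matrix (PIdx n) (PIdx n) F :=
  Matrix.fromBlocks 0 0 0
    (Matrix.fromBlocks 1 0 0 (Matrix.fromBlocks 1 0 0 (Nblock 0 A B)))

/-! The similarity `X ↦ S⁻¹XS` is realised on `T₀(A,B)` by the congruence
`diag(S⁻ᵀ, S⁻ᵀ, S, S)`: it transforms the upper-right blocks of `M` and `N` by `Y ↦ S⁻¹YS` and the
lower-left ones by `Y ↦ SᵀYS⁻ᵀ`, which fixes the identity and scalar blocks of `M` and conjugates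
`A, B` and `Aᵀ, Bᵀ` compatibly. Extending it by the identity on the first 31 coordinates gives the
congruence of `P(A,B)` with `P(C,D)`. -/

section BlockCongruence

universe u v w

variable {α : Type u} [Semiring α] {l : Type v} {m : Type w} [Fintype l] [Fintype m]

theorem fromBlocks_diagonal_transpose_mul_mul (U₁ U₂ : Matrix l l α) (V₁ V₂ : Matrix m m α)
    (W : Matrix l l α) (X : Matrix l m α) (Y : Matrix m l α) (Z : Matrix m m α) :
    (fromBlocks U₁ 0 0 V₁)ᵀ * fromBlocks W X Y Z * fromBlocks U₂ 0 0 V₂ =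
      fromBlocks (U₁ᵀ * W * U₂) (U₁ᵀ * X * V₂) (V₁ᵀ * Y * U₂) (V₁ᵀ * Z * V₂) := by
  simp [fromBlocks_transpose, fromBlocks_multiply]

theorem fromBlocks_one_transpose_mul_fromBlocks_diagonal_mul [DecidableEq l]
    (V Z : Matrix m m α) (W : Matrix l l α) :
    (fromBlocks (1 : Matrix l l α) 0 0 V)ᵀ * fromBlocks W 0 0 Z * fromBlocks 1 0 0 V =
      fromBlocks W 0 0 (Vᵀ * Z * V) := by
  simp [fromBlocks_diagonal_transpose_mul_mul]

end BlockCongruence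

section TPair

universe u

variable {F : Type u} [Field F] {n : ℕ}

def tPairCongr (T S : Matrix (Fin n) (Fin n) F) : Matrix (Blk n) (Blk n) F :=
  fromBlocks (fromBlocks Tᵀ 0 0 Tᵀ) 0 0 (fromBlocks S 0 0 S)

theorem isUnit_tPairCongr {T S : Matrix (Fin n) (Fin n) F} (hT : IsUnit T) (hS : IsUnit S) :
    IsUnit (tPairCongr T S) := by
  simp [tPairCongr, hT, hS]

theorem tPairCongr_transpose_mul_Mblock_mul {T S : Matrix (Fin n) (Fin n) F} (hTS : T * S = 1) :
    (tPairCongr T S)ᵀ * Mblock F n * tPairCongr T S = Mblock F n := by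
  have hST : Sᵀ * Tᵀ = 1 := by rw [← transpose_mul, hTS, transpose_one]
  simp only [tPairCongr, Mblock, fromBlocks_diagonal_transpose_mul_mul]
  simp [fromBlocks_transpose, fromBlocks_multiply, hTS, hST, ← fromBlocks_one]

theorem tPairCongr_transpose_mul_Nblock_mul (T S : Matrix (Fin n) (Fin n) F) (ε : F)
    (A B : Matrix (Fin n) (Fin n) F) :
    (tPairCongr T S)ᵀ * Nblock ε A B * tPairCongr T S = Nblock ε (T * A * S) (T * B * S) := by
  simp only [tPairCongr, Nblock, fromBlocks_diagonal_transpose_mul_mul]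
  simp [fromBlocks_transpose, transpose_mul, Matrix.mul_assoc]

theorem P_congruent_of_similar_general
    {F : Type*} [Field F]
    {n : ℕ} (A B C D S₀ : Matrix (Fin n) (Fin n) F)
    (hS : IsUnit S₀) (hC : S₀⁻¹ * A * S₀ = C) (hD : S₀⁻¹ * B * S₀ = D) :
    ∃ R : Matrix (PIdx n) (PIdx n) F, IsUnit R ∧
      Rᵀ * P1 F n * R = P1 F n ∧
      Rᵀ * P2 A B * R = P2 C D := by
  have hinv : S₀⁻¹ * S₀ = 1 := nonsing_inv_mul S₀ ((isUnit_iff_isUnit_det S₀).mp hS)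
  set Q := tPairCongr S₀⁻¹ S₀
  refine ⟨fromBlocks 1 0 0 (fromBlocks 1 0 0 (fromBlocks 1 0 0 Q)), ?_, ?_, ?_⟩
  · simpa [Q] using isUnit_tPairCongr (isUnit_nonsing_inv_iff.mpr hS) hS
  · simp only [P1, fromBlocks_one_transpose_mul_fromBlocks_diagonal_mul,
      tPairCongr_transpose_mul_Mblock_mul hinv, Q]
  · simp only [P2, fromBlocks_one_transpose_mul_fromBlocks_diagonal_mul,
      tPairCongr_transpose_mul_Nblock_mul, hC, hD, Q]

/-- If `S₀⁻¹AS₀ = C` and `S₀⁻¹BS₀ = D` with `S₀` invertible over a field of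
characteristic not two, then the pair `P(A,B) = (M₁, M₂(A,B))` is congruent to
`P(C,D)`: there is an invertible matrix `R` with `RᵀM₁R = M₁` and
`RᵀM₂(A,B)R = M₂(C,D)`. -/
theorem P_congruent_of_similar
    {F : Type*} [Field F] (h2 : (2 : F) ≠ 0)
    {n : ℕ} (A B C D S₀ : Matrix (Fin n) (Fin n) F)
    (hS : IsUnit S₀) (hC : S₀⁻¹ * A * S₀ = C) (hD : S₀⁻¹ * B * S₀ = D) :
    ∃ R : Matrix (PIdx n) (PIdx n) F, IsUnit R ∧
      Rᵀ * P1 F n * R = P1 F n ∧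
      Rᵀ * P2 A B * R = P2 C D :=
  P_congruent_of_similar_general A B C D S₀ hS hC hD
end TPair
end
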